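/- arXiv:1409.2052 — 9 statements merged into one kernel-verified Lean document; each statement's English description precedes it below -/
import Mathlib

section
/- Under the holonomy relations, for every z ∈ V with α(z) ≠ 0 for all α ∈ Δ, the Gaudin hamiltonians H(w) = Σ_{α∈Δ} (α(w)/α(z))·t_α, w ∈ V, pairwise commute: [H(w), H(w')] = 0 for all w, w' ∈ V. -/
/-!
Expanding the bracket, the diagonal terms vanish and each off-diagonal pair `(α, β)` lies in
exactly one plane `W = span {α, β}`; the pairs in a given plane are the distinct pairs of `Δ ∩ W`,
so it suffices to show that the partial sums over `Δ ∩ W` commute. As `W` is two-dimensional, the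
three functionals "evaluate at `z`, `w`, `w'`" are dependent on `W`, which gives an affine relation
`c₀ + c₁ α(w)/α(z) + c₂ α(w')/α(z) = 0` on `Δ ∩ W`. By the holonomy relation `T_W = ∑_{Δ ∩ W} t_β`
commutes with every `t_α`, `α ∈ Δ ∩ W`, so the relation makes a nontrivial combination of the two
partial sums a multiple of `T_W`, and their bracket vanishes.
-/

open Module Finset

theorem Finset.sum_offDiag_eq_sum_sum_offDiag_filter {ι X M : Type*} [DecidableEq ι]
    [DecidableEq X] [Membership ι X] [∀ ℓ : X, DecidablePred (· ∈ ℓ)] [AddCommMonoid M]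
    (S : Finset ι) (line : ι × ι → X)
    (hline : ∀ p ∈ S.offDiag, ∀ q ∈ S.offDiag, line q = line p ↔ q.1 ∈ line p ∧ q.2 ∈ line p)
    (h : ι × ι → M) :
    ∑ p ∈ S.offDiag, h p = ∑ ℓ ∈ S.offDiag.image line, ∑ p ∈ (S.filter (· ∈ ℓ)).offDiag, h p := by
  rw [← sum_fiberwise_of_maps_to fun p hp => mem_image_of_mem line hp]
  refine sum_congr rfl fun ℓ hℓ => ?_
  obtain ⟨p, hp, rfl⟩ := mem_image.mp hℓ
  congr 1
  ext q
  simp only [mem_filter, mem_offDiag]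
  constructor
  · rintro ⟨⟨hq₁, hq₂, hq⟩, hqℓ⟩
    have hmem := (hline p hp q (mem_offDiag.mpr ⟨hq₁, hq₂, hq⟩)).mp hqℓ
    exact ⟨⟨hq₁, hmem.1⟩, ⟨hq₂, hmem.2⟩, hq⟩
  · rintro ⟨⟨hq₁, hmem₁⟩, ⟨hq₂, hmem₂⟩, hq⟩
    exact ⟨⟨hq₁, hq₂, hq⟩, (hline p hp q (mem_offDiag.mpr ⟨hq₁, hq₂, hq⟩)).mpr ⟨hmem₁, hmem₂⟩⟩

theorem lie_sum_smul_sum_smul_eq_sum_offDiag {R L ι : Type*} [CommRing R] [LieRing L]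
    [LieAlgebra R L] [DecidableEq ι] (S : Finset ι) (t : ι → L) (f g : ι → R) :
    ⁅∑ i ∈ S, f i • t i, ∑ i ∈ S, g i • t i⁆
      = ∑ p ∈ S.offDiag, (f p.1 * g p.2) • ⁅t p.1, t p.2⁆ := by
  rw [sum_lie_sum, ← sum_product', ← diag_union_offDiag, sum_union (disjoint_diag_offDiag S)]
  have hdiag : ∑ p ∈ S.diag, ⁅f p.1 • t p.1, g p.2 • t p.2⁆ = 0 :=
    sum_eq_zero fun p hp => by rw [(mem_diag.mp hp).2, lie_smul, smul_lie, lie_self]; simp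
  rw [hdiag, zero_add]
  exact sum_congr rfl fun p _ => by rw [lie_smul, smul_lie, smul_smul, mul_comm]

theorem lie_sum_smul_sum_smul_eq_zero_of_affine_relation {K L ι : Type*} [Field K] [LieRing L]
    [LieAlgebra K L] (S : Finset ι) (t : ι → L) (hS : ∀ i ∈ S, ⁅t i, ∑ j ∈ S, t j⁆ = 0)
    (f g : ι → K) (c : Fin 3 → K) (hc : c ≠ 0)
    (hfg : ∀ i ∈ S, c 0 + c 1 * f i + c 2 * g i = 0) :
    ⁅∑ i ∈ S, f i • t i, ∑ i ∈ S, g i • t i⁆ = 0 := by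
  set T := ∑ j ∈ S, t j
  set F := ∑ i ∈ S, f i • t i
  set G := ∑ i ∈ S, g i • t i
  have hT : ∀ a : ι → K, ⁅∑ i ∈ S, a i • t i, T⁆ = 0 := fun a => by
    rw [sum_lie]
    exact sum_eq_zero fun i hi => by rw [smul_lie, hS i hi, smul_zero]
  have hFT : ⁅F, T⁆ = 0 := hT f
  have hTG : ⁅T, G⁆ = 0 := by rw [← lie_skew, hT g, neg_zero]
  have hrel : c 0 • T + c 1 • F + c 2 • G = 0 := by
    simp only [T, F, G, smul_sum, ← sum_add_distrib]
    refine sum_eq_zero fun i hi => ?_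
    have h : (c 0 + c 1 * f i + c 2 * g i) • t i = 0 := by rw [hfg i hi, zero_smul]
    linear_combination (norm := module) h
  by_cases h1 : c 1 = 0
  · by_cases h2 : c 2 = 0
    · have hS : S = ∅ := eq_empty_of_forall_notMem fun i hi => hc <| by
        have h0 := hfg i hi
        simp only [h1, h2, zero_mul, add_zero] at h0
        ext j; fin_cases j <;> simp [h0, h1, h2]
      simp [F, hS]
    · have hFG : c 2 • ⁅F, G⁆ = 0 := calc
        c 2 • ⁅F, G⁆ = ⁅F, c 0 • T + c 1 • F + c 2 • G⁆ := by
          simp [lie_add, lie_smul, hFT, h1]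
        _ = 0 := by rw [hrel, lie_zero]
      exact (smul_eq_zero.mp hFG).resolve_left h2
  · have hFG : c 1 • ⁅F, G⁆ = 0 := calc
      c 1 • ⁅F, G⁆ = ⁅c 0 • T + c 1 • F + c 2 • G, G⁆ := by
        simp [add_lie, smul_lie, hTG]
      _ = 0 := by rw [hrel, zero_lie]
    exact (smul_eq_zero.mp hFG).resolve_left h1

theorem Submodule.exists_ne_zero_forall_mem_sum_mul_eq_zero {K E : Type*} [Field K]
    [AddCommGroup E] [Module K E] {n : ℕ} (W : Submodule K E) [FiniteDimensional K W]
    (hW : finrank K W < n) (ℓ : Fin n → Dual K E) :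
    ∃ c : Fin n → K, c ≠ 0 ∧ ∀ x ∈ W, ∑ i, c i * ℓ i x = 0 := by
  have hdep : ¬ LinearIndependent K (M := Dual K W) fun i => (ℓ i).comp W.subtype := by
    intro hli
    have := hli.fintype_card_le_finrank
    rw [Subspace.dual_finrank_eq, Fintype.card_fin] at this
    omega
  obtain ⟨c, hc, i, hi⟩ := Fintype.not_linearIndependent_iff.mp hdep
  refine ⟨c, fun h => hi (by simp [h]), fun x hx => ?_⟩
  simpa using LinearMap.congr_fun hc ⟨x, hx⟩

theorem finrank_span_pair_eq_two {K E : Type*} [DivisionRing K] [AddCommGroup E] [Module K E]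
    {x y : E} (h : LinearIndependent K ![x, y]) : finrank K (Submodule.span K {x, y}) = 2 := by
  rw [← Matrix.range_cons_cons_empty x y ![], finrank_span_eq_card h, Fintype.card_fin]

theorem Submodule.span_pair_eq_iff_of_finrank_eq_two {K E : Type*} [DivisionRing K]
    [AddCommGroup E] [Module K E] {x y x' y' : E} (h : finrank K (span K {x, y}) = 2)
    (h' : finrank K (span K {x', y'}) = 2) :
    span K {x', y'} = span K {x, y} ↔ x' ∈ span K {x, y} ∧ y' ∈ span K {x, y} := by
  have := Module.finite_of_finrank_eq_succ h
  constructor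
  · rintro heq
    rw [← heq]
    exact ⟨subset_span (by simp), subset_span (by simp)⟩
  · rintro ⟨hx, hy⟩
    exact eq_of_le_of_finrank_eq (span_le.mpr (by simp [Set.insert_subset_iff, hx, hy]))
      (h'.trans h.symm)

open Classical in
theorem gaudin_hamiltonians_commute_general
    {V : Type*} [AddCommGroup V] [Module ℂ V]
    {L : Type*} [LieRing L] [LieAlgebra ℂ L]
    (Δ : Finset (Module.Dual ℂ V))
    (hne : ∀ α ∈ Δ, α ≠ 0)
    (hprop : ∀ α ∈ Δ, ∀ β ∈ Δ, ∀ c : ℂ, β = c • α → α = β)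
    (t : Module.Dual ℂ V → L)
    (holonomy : ∀ α ∈ Δ, ∀ W : Submodule ℂ (Module.Dual ℂ V),
      Module.finrank ℂ W = 2 → α ∈ W →
      ⁅t α, ∑ β ∈ Δ.filter (fun β => β ∈ W), t β⁆ = 0)
    (z : V) (hz : ∀ α ∈ Δ, α z ≠ 0) (w w' : V) :
    ⁅∑ α ∈ Δ, (α w / α z) • t α, ∑ α ∈ Δ, (α w' / α z) • t α⁆ = 0 := by
  set plane : Dual ℂ V × Dual ℂ V → Submodule ℂ (Dual ℂ V) := fun p =>
    Submodule.span ℂ {p.1, p.2}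
  have hplane : ∀ p ∈ Δ.offDiag, finrank ℂ (plane p) = 2 := fun p hp => by
    obtain ⟨hα, hβ, hαβ⟩ := mem_offDiag.mp hp
    exact finrank_span_pair_eq_two <| (LinearIndependent.pair_iff' (hne _ hα)).mpr
      fun c hc => hαβ (hprop _ hα _ hβ c hc.symm)
  rw [lie_sum_smul_sum_smul_eq_sum_offDiag, sum_offDiag_eq_sum_sum_offDiag_filter Δ plane
    fun p hp q hq => Submodule.span_pair_eq_iff_of_finrank_eq_two (hplane p hp) (hplane q hq)]
  refine sum_eq_zero fun W hW => ?_
  obtain ⟨p, hp, rfl⟩ := mem_image.mp hW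
  refine (lie_sum_smul_sum_smul_eq_sum_offDiag _ t (fun α => α w / α z)
    fun α => α w' / α z).symm.trans ?_
  have := Module.finite_of_finrank_eq_succ (hplane p hp)
  obtain ⟨c, hc, hrel⟩ := (plane p).exists_ne_zero_forall_mem_sum_mul_eq_zero
    (by rw [hplane p hp]; norm_num) (Dual.eval ℂ V ∘ ![z, w, w'])
  refine lie_sum_smul_sum_smul_eq_zero_of_affine_relation _ t (fun α hα => ?_) _ _ c hc
    fun α hα => ?_
  · exact holonomy α (mem_filter.mp hα).1 _ (hplane p hp) (mem_filter.mp hα).2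
  · obtain ⟨hαΔ, hαW⟩ := mem_filter.mp hα
    have hαrel := hrel α hαW
    simp only [Function.comp_apply, Dual.eval_apply, Fin.sum_univ_three, Fin.isValue,
      Matrix.cons_val_zero, Matrix.cons_val_one, Matrix.cons_val] at hαrel
    field_simp [hz α hαΔ]
    linear_combination hαrel

open Classical in
/-- Under the holonomy relations, the Gaudin hamiltonians
`H(w) = ∑_{α ∈ Δ} (α(w)/α(z)) • t_α` pairwise commute, for every `z` off the
arrangement. -/
theorem gaudin_hamiltonians_commute
    {V : Type*} [AddCommGroup V] [Module ℂ V] [FiniteDimensional ℂ V]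
    {L : Type*} [LieRing L] [LieAlgebra ℂ L]
    (Δ : Finset (Module.Dual ℂ V))
    (hne : ∀ α ∈ Δ, α ≠ 0)
    (hprop : ∀ α ∈ Δ, ∀ β ∈ Δ, ∀ c : ℂ, β = c • α → α = β)
    (hspan : Submodule.span ℂ (Δ : Set (Module.Dual ℂ V)) = ⊤)
    (t : Module.Dual ℂ V → L)
    (holonomy : ∀ α ∈ Δ, ∀ W : Submodule ℂ (Module.Dual ℂ V),
      Module.finrank ℂ W = 2 → α ∈ W →
      ⁅t α, ∑ β ∈ Δ.filter (fun β => β ∈ W), t β⁆ = 0)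
    (z : V) (hz : ∀ α ∈ Δ, α z ≠ 0) (w w' : V) :
    ⁅∑ α ∈ Δ, (α w / α z) • t α, ∑ α ∈ Δ, (α w' / α z) • t α⁆ = 0 :=
  gaudin_hamiltonians_commute_general Δ hne hprop t holonomy z hz w w'
end

section
/- Suppose Δ contains a subset B that is a basis of V* and an element θ ∈ Δ whose coefficients n_{θ,β} in the expansion θ = Σ_{β∈B} n_{θ,β} β are all nonzero. If z, z' ∈ V satisfy α(z) ≠ 0 and α(z') ≠ 0 for all α ∈ Δ and the spans G(z) and G(z') of the corresponding Gaudin hamiltonians coincide as subspaces of ℂ^Δ, then z' = λ·z for some nonzero scalar λ. -/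
/-!
Fix `β ∈ B` and a vector `e` with `γ e = δ_{γβ}` for `γ ∈ B`. The hamiltonian of `G(z')` at `e`
lies in `G(z)`, so it is the hamiltonian of `G(z)` at some `u`. Comparing coordinates on `B` gives
`γ u = 0` for `γ ≠ β` and `β u = β z / β z'`; comparing the `θ`-coordinate, where `n_{θ,β} ≠ 0`,
gives `β u = θ z / θ z'`. So `β z' / β z = θ z' / θ z` for every `β ∈ B`, and as `B` spans `V*`,
`z' = (θ z' / θ z) • z`.
-/

open Module Submodule

section
variable {K V : Type*} [Field K] [AddCommGroup V] [Module K V]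

def gaudinSpan (Δ : Finset (Dual K V)) (z : V) : Submodule K ({α // α ∈ Δ} → K) :=
  span K (Set.range fun w : V => fun α : {α // α ∈ Δ} => (α : Dual K V) w / (α : Dual K V) z)

theorem mem_gaudinSpan_iff {Δ : Finset (Dual K V)} {z : V} {x : {α // α ∈ Δ} → K} :
    x ∈ gaudinSpan Δ z ↔ ∃ u : V, ∀ α : {α // α ∈ Δ}, (α : Dual K V) u / (α : Dual K V) z = x α := by
  let F : V →ₗ[K] ({α // α ∈ Δ} → K) :=
    LinearMap.pi fun α => ((α : Dual K V) z)⁻¹ • (α : Dual K V)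
  have hF : (fun w : V => fun α : {α // α ∈ Δ} => (α : Dual K V) w / (α : Dual K V) z) = F := by
    funext w α
    simp [F, div_eq_inv_mul]
  rw [gaudinSpan, hF, ← LinearMap.coe_range, span_eq, LinearMap.mem_range, ← hF]
  simp only [funext_iff]

theorem exists_apply_eq_one_of_linearIndependent {B : Finset (Dual K V)}
    (hB : LinearIndependent K (fun β : {β // β ∈ B} => (β : Dual K V))) {β : Dual K V}
    (hβ : β ∈ B) : ∃ e : V, β e = 1 ∧ ∀ γ ∈ B, γ ≠ β → γ e = 0 := by
  classical
  let L : V →ₗ[K] ({β // β ∈ B} → K) := LinearMap.pi fun γ => (γ : Dual K V)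
  have hL : LinearMap.range L = ⊤ := by
    rw [← span_eq (LinearMap.range L), LinearMap.coe_range]
    exact span_flip_eq_top_iff_linearIndependent.2 <|
      hB.map' (LinearMap.ltoFun K V K K) (LinearMap.ker_eq_bot.2 DFunLike.coe_injective)
  obtain ⟨e, he⟩ := LinearMap.range_eq_top.1 hL (Pi.single ⟨β, hβ⟩ 1)
  refine ⟨e, by simpa [L] using congrFun he ⟨β, hβ⟩, fun γ hγ hγβ => ?_⟩
  simpa [L, hγβ] using congrFun he ⟨γ, hγ⟩

theorem eq_smul_of_forall_apply_eq {B : Set (Dual K V)} (hB : span K B = ⊤) {z z' : V} {c : K}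
    (h : ∀ β ∈ B, β z' = c * β z) : z' = c • z := by
  have hker : span K B ≤ LinearMap.ker (Dual.eval K V (z' - c • z)) :=
    span_le.2 fun β hβ => by simp [h β hβ]
  rwa [hB, top_le_iff, LinearMap.ker_eq_top, eval_apply_eq_zero_iff, sub_eq_zero] at hker

theorem sum_smul_apply_of_apply_eq_zero {B : Finset (Dual K V)} (c : Dual K V → K)
    {β : Dual K V} (hβ : β ∈ B) {v : V} (hv : ∀ γ ∈ B, γ ≠ β → γ v = 0) :
    (∑ γ ∈ B, c γ • γ) v = c β * β v := by
  rw [LinearMap.sum_apply, Finset.sum_eq_single_of_mem β hβ fun γ hγ hγβ => by simp [hv γ hγ hγβ]]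
  rfl

theorem mul_apply_eq_of_gaudinSpan_le {Δ B : Finset (Dual K V)} (hBΔ : B ⊆ Δ)
    (hB : LinearIndependent K (fun β : {β // β ∈ B} => (β : Dual K V)))
    {θ : Dual K V} (hθ : θ ∈ Δ) {n : Dual K V → K} (hθB : θ = ∑ β ∈ B, n β • β)
    (hn : ∀ β ∈ B, n β ≠ 0) {z z' : V} (hz : ∀ α ∈ Δ, α z ≠ 0) (hz' : ∀ α ∈ Δ, α z' ≠ 0)
    (hle : gaudinSpan Δ z' ≤ gaudinSpan Δ z) {β : Dual K V} (hβ : β ∈ B) :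
    β z * θ z' = θ z * β z' := by
  obtain ⟨e, hβe, he⟩ := exists_apply_eq_one_of_linearIndependent hB hβ
  obtain ⟨u, hu⟩ := mem_gaudinSpan_iff.1 <| hle <| subset_span ⟨e, rfl⟩
  have hue : ∀ α ∈ Δ, α u * α z' = α e * α z := fun α hα =>
    (div_eq_div_iff (hz α hα) (hz' α hα)).1 (hu ⟨α, hα⟩)
  have hu0 : ∀ γ ∈ B, γ ≠ β → γ u = 0 := fun γ hγ hγβ => by
    simpa [he γ hγ hγβ, hz' γ (hBΔ hγ)] using hue γ (hBΔ hγ)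
  have hθu : θ u = n β * β u := hθB ▸ sum_smul_apply_of_apply_eq_zero n hβ hu0
  have hθe : θ e = n β := by
    rw [hθB, sum_smul_apply_of_apply_eq_zero n hβ he, hβe, mul_one]
  have hβu_β : β u * β z' = β z := by simpa [hβe] using hue β (hBΔ hβ)
  have hβu_θ : β u * θ z' = θ z := by
    refine mul_left_cancel₀ (hn β hβ) ?_
    linear_combination hue θ hθ - θ z' * hθu + θ z * hθe
  linear_combination β z' * hβu_θ - θ z' * hβu_β

end

theorem gaudin_span_determines_point_general
    {V : Type*} [AddCommGroup V] [Module ℂ V]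
    (Δ : Finset (Module.Dual ℂ V))
    (B : Finset (Module.Dual ℂ V)) (hBΔ : B ⊆ Δ)
    (hBind : LinearIndependent ℂ (fun β : {β // β ∈ B} => (β : Module.Dual ℂ V)))
    (hBspan : Submodule.span ℂ (B : Set (Module.Dual ℂ V)) = ⊤)
    (n : Module.Dual ℂ V → Module.Dual ℂ V → ℂ)
    (hn : ∀ α ∈ Δ, α = ∑ β ∈ B, n α β • β)
    (θ : Module.Dual ℂ V) (hθ : θ ∈ Δ) (hθn : ∀ β ∈ B, n θ β ≠ 0)
    (z z' : V) (hz : ∀ α ∈ Δ, α z ≠ 0) (hz' : ∀ α ∈ Δ, α z' ≠ 0)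
    (hGG : Submodule.span ℂ (Set.range
        (fun w : V => fun α : {α // α ∈ Δ} =>
          (α : Module.Dual ℂ V) w / (α : Module.Dual ℂ V) z)) =
      Submodule.span ℂ (Set.range
        (fun w : V => fun α : {α // α ∈ Δ} =>
          (α : Module.Dual ℂ V) w / (α : Module.Dual ℂ V) z'))) :
    ∃ lam : ℂ, lam ≠ 0 ∧ z' = lam • z := by
  have hle : gaudinSpan Δ z' ≤ gaudinSpan Δ z := hGG.ge
  refine ⟨θ z' / θ z, div_ne_zero (hz' θ hθ) (hz θ hθ),
    eq_smul_of_forall_apply_eq hBspan fun β hβ => ?_⟩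
  have hratio := mul_apply_eq_of_gaudinSpan_le hBΔ hBind hθ (hn θ hθ) hθn hz hz' hle hβ
  field_simp [hz θ hθ]
  linear_combination -hratio

/-- If `Δ` contains a basis `B` of `V*` and a vector `θ` whose expansion in `B`
has all coefficients nonzero, then the span of the Gaudin hamiltonians `G(z)`
determines `z` up to a nonzero scalar. -/
theorem gaudin_span_determines_point
    {V : Type*} [AddCommGroup V] [Module ℂ V] [FiniteDimensional ℂ V]
    (Δ : Finset (Module.Dual ℂ V))
    (hne : ∀ α ∈ Δ, α ≠ 0)
    (hprop : ∀ α ∈ Δ, ∀ β ∈ Δ, ∀ c : ℂ, β = c • α → α = β)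
    (hspan : Submodule.span ℂ (Δ : Set (Module.Dual ℂ V)) = ⊤)
    (B : Finset (Module.Dual ℂ V)) (hBΔ : B ⊆ Δ)
    (hBind : LinearIndependent ℂ (fun β : {β // β ∈ B} => (β : Module.Dual ℂ V)))
    (hBspan : Submodule.span ℂ (B : Set (Module.Dual ℂ V)) = ⊤)
    (n : Module.Dual ℂ V → Module.Dual ℂ V → ℂ)
    (hn : ∀ α ∈ Δ, α = ∑ β ∈ B, n α β • β)
    (θ : Module.Dual ℂ V) (hθ : θ ∈ Δ) (hθn : ∀ β ∈ B, n θ β ≠ 0)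
    (z z' : V) (hz : ∀ α ∈ Δ, α z ≠ 0) (hz' : ∀ α ∈ Δ, α z' ≠ 0)
    (hGG : Submodule.span ℂ (Set.range
        (fun w : V => fun α : {α // α ∈ Δ} =>
          (α : Module.Dual ℂ V) w / (α : Module.Dual ℂ V) z)) =
      Submodule.span ℂ (Set.range
        (fun w : V => fun α : {α // α ∈ Δ} =>
          (α : Module.Dual ℂ V) w / (α : Module.Dual ℂ V) z'))) :
    ∃ lam : ℂ, lam ≠ 0 ∧ z' = lam • z :=
  gaudin_span_determines_point_general Δ B hBΔ hBind hBspan n hn θ hθ hθn z z' hz hz' hGG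
end

section
/- Let S be a nested set for Δ containing Δ itself, and let α ∈ Δ. Then the set of flats A ∈ S with α ∈ A is nonempty and totally ordered by inclusion; in particular there is a unique minimal flat A_S(α) ∈ S containing α. -/
/-- `A` is a flat of the arrangement `Δ`: a nonempty subset of `Δ` with
`span(A) ∩ Δ = A`. -/
def IsFlat {D : Type*} [AddCommGroup D] [Module ℂ D] (Δ A : Finset D) : Prop :=
  A.Nonempty ∧ A ⊆ Δ ∧ ∀ α ∈ Δ, α ∈ Submodule.span ℂ (A : Set D) → α ∈ A

/-- A flat is irreducible if it is not the union of two flats whose spans form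
a direct sum decomposition of its span. -/
def IsIrreducibleFlat {D : Type*} [AddCommGroup D] [Module ℂ D] [DecidableEq D]
    (Δ A : Finset D) : Prop :=
  IsFlat Δ A ∧
    ¬ ∃ A₁ A₂ : Finset D, IsFlat Δ A₁ ∧ IsFlat Δ A₂ ∧ A₁ ∪ A₂ = A ∧
      Disjoint (Submodule.span ℂ (A₁ : Set D)) (Submodule.span ℂ (A₂ : Set D)) ∧
      Submodule.span ℂ (A₁ : Set D) ⊔ Submodule.span ℂ (A₂ : Set D) =
        Submodule.span ℂ (A : Set D)

/-- A nested set for `Δ`: a set of irreducible flats such that the spans of any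
family of pairwise non-comparable members form a direct sum. -/
def IsNestedSet {D : Type*} [AddCommGroup D] [Module ℂ D] [DecidableEq D]
    (Δ : Finset D) (S : Finset (Finset D)) : Prop :=
  (∀ A ∈ S, IsIrreducibleFlat Δ A) ∧
  ∀ T : Finset (Finset D), T ⊆ S →
    (∀ A ∈ T, ∀ B ∈ T, A ≠ B → ¬ A ⊆ B) →
    iSupIndep (fun A : {x // x ∈ T} => Submodule.span ℂ ((A : Finset D) : Set D)) ∧
    (⨆ A : {x // x ∈ T}, Submodule.span ℂ ((A : Finset D) : Set D)) =
      Submodule.span ℂ ((T.biUnion id : Finset D) : Set D)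

theorem existsUnique_isLeast_of_total {β : Type*} [PartialOrder β] [WellFoundedLT β]
    {P : β → Prop} (hP : ∃ a, P a) (htot : ∀ a b, P a → P b → a ≤ b ∨ b ≤ a) :
    ∃! a, IsLeast {x | P x} a := by
  obtain ⟨a, ha⟩ := exists_minimal_of_wellFoundedLT P hP
  refine ⟨a, ⟨ha.prop, fun b hb => ?_⟩, fun c hc => hc.unique ⟨ha.prop, fun b hb => ?_⟩⟩ <;>
    exact (htot a b ha.prop hb).elim id (ha.le_of_le hb)

namespace IsNestedSet

variable {D : Type*} [AddCommGroup D] [Module ℂ D] [DecidableEq D]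
  {Δ : Finset D} {S : Finset (Finset D)} {A B : Finset D}

theorem disjoint_span_of_not_subset (hS : IsNestedSet Δ S) (hA : A ∈ S) (hB : B ∈ S)
    (hAB : ¬A ⊆ B) (hBA : ¬B ⊆ A) :
    Disjoint (Submodule.span ℂ (A : Set D)) (Submodule.span ℂ (B : Set D)) := by
  have hne : A ≠ B := by rintro rfl; exact hAB subset_rfl
  have hantichain : ∀ X ∈ ({A, B} : Finset (Finset D)), ∀ Y ∈ ({A, B} : Finset (Finset D)),
      X ≠ Y → ¬X ⊆ Y := by
    simp only [Finset.mem_insert, Finset.mem_singleton]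
    rintro X (rfl | rfl) Y (rfl | rfl) hXY <;> first | exact absurd rfl hXY | assumption
  have hindep := (hS.2 {A, B} (Finset.insert_subset hA (Finset.singleton_subset_iff.2 hB))
    hantichain).1
  exact hindep.pairwiseDisjoint (i := ⟨A, by simp⟩) (j := ⟨B, by simp⟩) (by simpa using hne)

theorem subset_total_of_mem (hS : IsNestedSet Δ S) (hA : A ∈ S) (hB : B ∈ S) {α : D}
    (hα : α ≠ 0) (hαA : α ∈ A) (hαB : α ∈ B) : A ⊆ B ∨ B ⊆ A := by
  by_contra! h
  exact hα <| Submodule.disjoint_def.1 (hS.disjoint_span_of_not_subset hA hB h.1 h.2) α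
    (Submodule.subset_span hαA) (Submodule.subset_span hαB)

end IsNestedSet

open Classical in
theorem nested_set_flats_containing_linearly_ordered_general
    {V : Type*} [AddCommGroup V] [Module ℂ V]
    (Δ : Finset (Module.Dual ℂ V))
    (hne : ∀ α ∈ Δ, α ≠ 0)
    (S : Finset (Finset (Module.Dual ℂ V)))
    (hS : IsNestedSet Δ S) (hΔS : Δ ∈ S)
    (α : Module.Dual ℂ V) (hα : α ∈ Δ) :
    (∃ A ∈ S, α ∈ A) ∧
    (∀ A ∈ S, α ∈ A → ∀ B ∈ S, α ∈ B → A ⊆ B ∨ B ⊆ A) ∧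
    (∃! A₀ : Finset (Module.Dual ℂ V),
      A₀ ∈ S ∧ α ∈ A₀ ∧ ∀ B ∈ S, α ∈ B → A₀ ⊆ B) := by
  have htot : ∀ A ∈ S, α ∈ A → ∀ B ∈ S, α ∈ B → A ⊆ B ∨ B ⊆ A :=
    fun A hA hαA B hB hαB => hS.subset_total_of_mem hA hB (hne α hα) hαA hαB
  have hleast := existsUnique_isLeast_of_total (P := fun A => A ∈ S ∧ α ∈ A) ⟨Δ, hΔS, hα⟩
    fun A B hA hB => htot A hA.1 hA.2 B hB.1 hB.2
  refine ⟨⟨Δ, hΔS, hα⟩, htot, ?_⟩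
  simpa [IsLeast, lowerBounds, and_assoc] using hleast

open Classical in
/-- For a nested set `S` containing `Δ` and `α ∈ Δ`, the flats of `S`
containing `α` are nonempty and linearly ordered by inclusion; in particular
there is a unique minimal flat in `S` containing `α`. -/
theorem nested_set_flats_containing_linearly_ordered
    {V : Type*} [AddCommGroup V] [Module ℂ V] [FiniteDimensional ℂ V]
    (Δ : Finset (Module.Dual ℂ V))
    (hne : ∀ α ∈ Δ, α ≠ 0)
    (hprop : ∀ α ∈ Δ, ∀ β ∈ Δ, ∀ c : ℂ, β = c • α → α = β)
    (hspan : Submodule.span ℂ (Δ : Set (Module.Dual ℂ V)) = ⊤)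
    (S : Finset (Finset (Module.Dual ℂ V)))
    (hS : IsNestedSet Δ S) (hΔS : Δ ∈ S)
    (α : Module.Dual ℂ V) (hα : α ∈ Δ) :
    (∃ A ∈ S, α ∈ A) ∧
    (∀ A ∈ S, α ∈ A → ∀ B ∈ S, α ∈ B → A ⊆ B ∨ B ⊆ A) ∧
    (∃! A₀ : Finset (Module.Dual ℂ V),
      A₀ ∈ S ∧ α ∈ A₀ ∧ ∀ B ∈ S, α ∈ B → A₀ ⊆ B) :=
  nested_set_flats_containing_linearly_ordered_general Δ hne S hS hΔS α hα
end

section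
/- Let α₁, …, α_r be a linearly independent family of nonzero vectors in E with (α_i, α_j) ≤ 0 for all i ≠ j, and suppose that for each i ≥ 2 there exists j < i with (α_i, α_j) < 0. Let s_i denote the orthogonal reflection in the hyperplane perpendicular to α_i. Then for each i = 1, …, r the vector v_i := s_i s_{i−1} ⋯ s_2 α₁ is a linear combination of α₁, …, α_i with all coefficients strictly positive; in particular s_r ⋯ s_2 α₁ is a linear combination of α₁, …, α_r with all coefficients strictly positive. -/
open scoped RealInnerProductSpace

/-- The orthogonal reflection of `v` in the hyperplane perpendicular to `α`. -/
noncomputable def reflVec {E : Type*} [NormedAddCommGroup E]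
    [InnerProductSpace ℝ E] (α v : E) : E :=
  v - (2 * ⟪α, v⟫ / ⟪α, α⟫) • α

/-- `iterRefl α i = s_{α i} ⋯ s_{α 1} (α 0)`, the iterated reflection of the
first vector by the subsequent ones. -/
noncomputable def iterRefl {E : Type*} [NormedAddCommGroup E]
    [InnerProductSpace ℝ E] (α : ℕ → E) : ℕ → E
  | 0 => α 0
  | i + 1 => reflVec (α (i + 1)) (iterRefl α i)

/-!
Induction on `i`. If `v = s_i ⋯ s_2 α₁` is a positive combination of `α₁, …, α_i`, then
`(α_{i+1}, v) < 0`: every term `c_j (α_{i+1}, α_j)` is `≤ 0` and the one for the earlier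
neighbour of `α_{i+1}` is `< 0`. Hence `s_{i+1} v = v - 2 (α_{i+1}, v)/(α_{i+1}, α_{i+1}) α_{i+1}`
adds a strictly positive multiple of `α_{i+1}` to `v`.
-/

section

variable {E : Type*} [NormedAddCommGroup E] [InnerProductSpace ℝ E]

theorem reflVec_eq_add_pos_smul {a v : E} (h : ⟪a, v⟫ < 0) :
    ∃ t : ℝ, 0 < t ∧ reflVec a v = v + t • a := by
  have ha : a ≠ 0 := by
    rintro rfl
    simp at h
  have haa : 0 < ⟪a, a⟫ := real_inner_self_pos.mpr ha
  refine ⟨-(2 * ⟪a, v⟫ / ⟪a, a⟫), neg_pos.mpr (div_neg_of_neg_of_pos (by linarith) haa), ?_⟩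
  rw [reflVec, neg_smul, sub_eq_add_neg]

theorem inner_sum_smul_neg {ι : Type*} {s : Finset ι} {c : ι → ℝ} {v : ι → E} {a : E}
    (hc : ∀ j ∈ s, 0 < c j) (hle : ∀ j ∈ s, ⟪a, v j⟫ ≤ 0) (hlt : ∃ j ∈ s, ⟪a, v j⟫ < 0) :
    ⟪a, ∑ j ∈ s, c j • v j⟫ < 0 := by
  rw [inner_sum]
  simp only [real_inner_smul_right]
  refine Finset.sum_neg' (fun j hj => mul_nonpos_of_nonneg_of_nonpos (hc j hj).le (hle j hj)) ?_
  obtain ⟨j, hj, hneg⟩ := hlt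
  exact ⟨j, hj, mul_neg_of_pos_of_neg (hc j hj) hneg⟩

theorem exists_pos_sum_range_succ_eq_add_smul {n : ℕ} {c : ℕ → ℝ} {t : ℝ} (α : ℕ → E)
    (hc : ∀ j ≤ n, 0 < c j) (ht : 0 < t) :
    ∃ c' : ℕ → ℝ, (∀ j ≤ n + 1, 0 < c' j) ∧
      ∑ j ∈ Finset.range (n + 1), c j • α j + t • α (n + 1)
        = ∑ j ∈ Finset.range (n + 2), c' j • α j := by
  refine ⟨Function.update c (n + 1) t, fun j hj => ?_, ?_⟩
  · rcases eq_or_ne j (n + 1) with rfl | hne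
    · simpa using ht
    · simpa [hne] using hc j (by omega)
  · rw [Finset.sum_range_succ _ (n + 1), Function.update_self]
    congr 1
    refine Finset.sum_congr rfl fun j hj => ?_
    rw [Function.update_of_ne (by simp at hj; omega)]

end

theorem iterated_reflection_positive_coefficients_general
    {E : Type*} [NormedAddCommGroup E] [InnerProductSpace ℝ E]
    (r : ℕ) (α : ℕ → E)
    (hobtuse : ∀ i < r, ∀ j < r, i ≠ j → ⟪α i, α j⟫ ≤ 0)
    (hconn : ∀ i, 0 < i → i < r → ∃ j < i, ⟪α j, α i⟫ < 0) :
    ∀ i < r, ∃ c : ℕ → ℝ, (∀ j ≤ i, 0 < c j) ∧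
      iterRefl α i = ∑ j ∈ Finset.range (i + 1), c j • α j := by
  intro i
  induction i with
  | zero => exact fun _ => ⟨fun _ => 1, fun _ _ => one_pos, by simp [iterRefl]⟩
  | succ n ih =>
    intro hn
    obtain ⟨c, hc, hsum⟩ := ih (by omega)
    have hneg : ⟪α (n + 1), iterRefl α n⟫ < 0 := by
      obtain ⟨j₀, hj₀, hj₀neg⟩ := hconn (n + 1) n.succ_pos hn
      rw [hsum]
      refine inner_sum_smul_neg (fun j hj => hc j (by simp at hj; omega))
        (fun j hj => hobtuse _ hn _ (by simp at hj; omega) (by simp at hj; omega))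
        ⟨j₀, by simpa using hj₀, by rwa [real_inner_comm]⟩
    obtain ⟨t, ht, hrefl⟩ := reflVec_eq_add_pos_smul hneg
    obtain ⟨c', hc', hsum'⟩ := exists_pos_sum_range_succ_eq_add_smul α hc ht
    exact ⟨c', hc', by rw [iterRefl, hrefl, hsum, hsum']⟩

/-- If `α 0, …, α (r-1)` are linearly independent with pairwise nonpositive
inner products, and each (other than the first) is non-orthogonal to an
earlier one, then each iterated reflection `s_i ⋯ s_2 α₁` is a strictly
positive linear combination of `α 0, …, α i`. -/
theorem iterated_reflection_positive_coefficients
    {E : Type*} [NormedAddCommGroup E] [InnerProductSpace ℝ E]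
    [FiniteDimensional ℝ E]
    (r : ℕ) (α : ℕ → E)
    (hind : LinearIndependent ℝ (fun i : Fin r => α i))
    (hne : ∀ i < r, α i ≠ 0)
    (hobtuse : ∀ i < r, ∀ j < r, i ≠ j → ⟪α i, α j⟫ ≤ 0)
    (hconn : ∀ i, 0 < i → i < r → ∃ j < i, ⟪α j, α i⟫ < 0) :
    ∀ i < r, ∃ c : ℕ → ℝ, (∀ j ≤ i, 0 < c j) ∧
      iterRefl α i = ∑ j ∈ Finset.range (i + 1), c j • α j :=
  iterated_reflection_positive_coefficients_general r α hobtuse hconn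
end

section
/- Let Φ be a Coxeter root system in E, Δ ⊆ Φ a positive system (i.e., Φ is the disjoint union of Δ and −Δ), G the group of orthogonal transformations of E generated by the reflections s_α, α ∈ Φ, and k : Φ → ℂ a function with k_{−α} = k_α and k_{gα} = k_α for all α ∈ Φ, g ∈ G. Then in the group algebra ℂ[G], regarded as a Lie algebra with the commutator bracket, for every α ∈ Δ and every 2-dimensional subspace P ⊆ E containing α, one has [k_α s_α, Σ_{β ∈ Δ∩P} k_β s_β] = 0; that is, the elements t_α = k_α s_α satisfy the holonomy relations of the reflection arrangement. -/
/-!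
Write `s = s_α`. Since `α ∈ P`, `s` maps `P` to itself, so `β ↦ ±sβ`, with the sign chosen to
land in `Δ`, is an involution of `Δ ∩ P`. It preserves `k` (by `G`-invariance and evenness), and
`s s_β s⁻¹ = s_{sβ} = s_{±sβ}`. Conjugation by `s` therefore only permutes the terms of
`Σ_{β ∈ Δ∩P} k_β s_β`, so `s_α` commutes with this sum.
-/

open scoped RealInnerProductSpace

namespace Submodule

variable {E : Type*} [NormedAddCommGroup E] [InnerProductSpace ℝ E]

theorem reflection_orthogonal_span_singleton_neg (v : E) :
    reflection (ℝ ∙ -v)ᗮ = reflection (ℝ ∙ v)ᗮ := by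
  simp only [← Set.neg_singleton, span_neg]

theorem reflection_orthogonal_span_singleton_mem {P : Submodule ℝ E} {α v : E}
    (hα : α ∈ P) (hv : v ∈ P) : reflection (ℝ ∙ α)ᗮ v ∈ P := by
  have hproj : (ℝ ∙ α).starProjection v ∈ P :=
    (span_singleton_le_iff_mem α P).mpr hα ((ℝ ∙ α).starProjection_apply_mem v)
  rw [reflection_orthogonal_apply, reflection_apply]
  exact P.neg_mem (P.sub_mem (P.smul_of_tower_mem 2 hproj) hv)

theorem reflection_orthogonal_span_singleton_map (f : E ≃ₗᵢ[ℝ] E) (v : E) :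
    reflection (ℝ ∙ f v)ᗮ = f * reflection (ℝ ∙ v)ᗮ * f⁻¹ := by
  have hmap : (ℝ ∙ f v)ᗮ = (ℝ ∙ v)ᗮ.map (f.toLinearEquiv : E →ₗ[ℝ] E) := by
    rw [map_orthogonal_equiv, map_span, Set.image_singleton]
    rfl
  simp only [hmap, reflection_map]
  rfl

end Submodule

namespace MonoidAlgebra

variable {R G ι : Type*} [CommSemiring R] [Group G]

theorem commute_of_sum_of_conj_involution (g : G) {t : Finset ι} (c : ι → R) (r : ι → G)
    (σ : ι → ι) (hσ : ∀ i ∈ t, σ i ∈ t) (hσσ : ∀ i ∈ t, σ (σ i) = i)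
    (hc : ∀ i ∈ t, c (σ i) = c i) (hr : ∀ i ∈ t, r (σ i) = g * r i * g⁻¹) :
    Commute (of R G g) (∑ i ∈ t, c i • of R G (r i)) := by
  simp only [Commute, SemiconjBy, Finset.mul_sum, Finset.sum_mul, mul_smul_comm, smul_mul_assoc,
    ← map_mul]
  refine Finset.sum_nbij' σ σ hσ hσ hσσ hσσ fun i hi => ?_
  rw [hc i hi, hr i hi, inv_mul_cancel_right]

end MonoidAlgebra

section PositiveSystem

variable {V : Type*} [AddCommGroup V] [DecidableEq V]

def positiveRep (Δ : Finset V) (v : V) : V := if v ∈ Δ then v else -v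

theorem positiveRep_eq_or_eq_neg (Δ : Finset V) (v : V) :
    positiveRep Δ v = v ∨ positiveRep Δ v = -v := by
  unfold positiveRep; split_ifs <;> simp

theorem apply_positiveRep {W : Type*} (f : V → W) (Δ : Finset V) {v : V} (hf : f (-v) = f v) :
    f (positiveRep Δ v) = f v := by
  rcases positiveRep_eq_or_eq_neg Δ v with h | h <;> rw [h]
  exact hf

theorem positiveRep_mem {Δ : Finset V} {v : V} (hv : v ∈ Δ ∨ -v ∈ Δ) : positiveRep Δ v ∈ Δ := by
  unfold positiveRep; split_ifs with h
  · exact h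
  · exact hv.resolve_left h

theorem positiveRep_eq_of_eq_or_eq_neg {Δ : Finset V} {v w : V} (hv : v ∈ Δ) (hnv : -v ∉ Δ)
    (hw : w = v ∨ w = -v) : positiveRep Δ w = v := by
  rcases hw with rfl | rfl
  · exact if_pos hv
  · rw [positiveRep, if_neg hnv, neg_neg]

end PositiveSystem

open Submodule MonoidAlgebra

open Classical in
theorem reflections_satisfy_holonomy_relations_general
    {E : Type*} [NormedAddCommGroup E] [InnerProductSpace ℝ E]
    (Φ : Finset E)
    (hrefl : ∀ α ∈ Φ, ∀ β ∈ Φ, Submodule.reflection (ℝ ∙ α)ᗮ β ∈ Φ)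
    (Δ : Finset E) (hΔΦ : Δ ⊆ Φ)
    (hpos : ∀ α ∈ Φ, (α ∈ Δ ∧ -α ∉ Δ) ∨ (α ∉ Δ ∧ -α ∈ Δ))
    (k : E → ℂ)
    (hkeven : ∀ α ∈ Φ, k (-α) = k α)
    (hkinv : ∀ α ∈ Φ,
      ∀ g ∈ Subgroup.closure {g : E ≃ₗᵢ[ℝ] E | ∃ β ∈ Φ, g = Submodule.reflection (ℝ ∙ β)ᗮ},
        k (g α) = k α) :
    ∀ α ∈ Δ, ∀ P : Submodule ℝ E, Module.finrank ℝ P = 2 → α ∈ P →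
      ⁅k α • MonoidAlgebra.of ℂ (E ≃ₗᵢ[ℝ] E) (Submodule.reflection (ℝ ∙ α)ᗮ),
       ∑ β ∈ Δ.filter (fun β => β ∈ P),
         k β • MonoidAlgebra.of ℂ (E ≃ₗᵢ[ℝ] E) (Submodule.reflection (ℝ ∙ β)ᗮ)⁆ = 0 := by
  intro α hα P _ hαP
  set s := reflection (ℝ ∙ α)ᗮ
  have hsG : s ∈ Subgroup.closure {g | ∃ β ∈ Φ, g = reflection (ℝ ∙ β)ᗮ} :=
    Subgroup.subset_closure ⟨α, hΔΦ hα, rfl⟩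
  have hsΦ : ∀ β ∈ Δ, s β ∈ Φ := fun β hβ => hrefl α (hΔΦ hα) β (hΔΦ hβ)
  have hnegΔ : ∀ β ∈ Δ, -β ∉ Δ := fun β hβ => ((hpos β (hΔΦ hβ)).resolve_right (·.1 hβ)).2
  rw [Ring.lie_def, smul_mul_assoc, mul_smul_comm, sub_eq_zero,
    (commute_of_sum_of_conj_involution s _ _ (fun β => positiveRep Δ (s β)) ?_ ?_ ?_ ?_).eq]
  · intro β hβ
    obtain ⟨hβΔ, hβP⟩ := Finset.mem_filter.mp hβ
    have hsP := reflection_orthogonal_span_singleton_mem hαP hβP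
    refine Finset.mem_filter.mpr ⟨positiveRep_mem ((hpos _ (hsΦ β hβΔ)).imp (·.1) (·.2)), ?_⟩
    rcases positiveRep_eq_or_eq_neg Δ (s β) with h | h <;> rw [h]
    exacts [hsP, P.neg_mem hsP]
  · intro β hβ
    have hβΔ := (Finset.mem_filter.mp hβ).1
    refine positiveRep_eq_of_eq_or_eq_neg hβΔ (hnegΔ β hβΔ) ?_
    rcases positiveRep_eq_or_eq_neg Δ (s β) with h | h <;> rw [h] <;>
      simp [s, reflection_reflection]
  · intro β hβ
    have hβΔ := (Finset.mem_filter.mp hβ).1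
    rw [apply_positiveRep k Δ (hkeven _ (hsΦ β hβΔ)), hkinv β (hΔΦ hβΔ) s hsG]
  · rintro β -
    rw [apply_positiveRep (fun v => reflection (ℝ ∙ v)ᗮ) Δ
      (reflection_orthogonal_span_singleton_neg _), reflection_orthogonal_span_singleton_map]

open Classical in
/-- For a Coxeter root system `Φ` with positive system `Δ`, reflection group
`G`, and a `G`-invariant even multiplicity function `k`, the elements
`t_α = k_α s_α` of the group algebra satisfy the holonomy relations of the
reflection arrangement. -/
theorem reflections_satisfy_holonomy_relations
    {E : Type*} [NormedAddCommGroup E] [InnerProductSpace ℝ E]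
    [FiniteDimensional ℝ E]
    (Φ : Finset E)
    (hne : (0 : E) ∉ Φ)
    (hspan : Submodule.span ℝ (Φ : Set E) = ⊤)
    (hneg : ∀ α ∈ Φ, -α ∈ Φ)
    (hmul : ∀ α ∈ Φ, ∀ c : ℝ, c • α ∈ Φ → c = 1 ∨ c = -1)
    (hrefl : ∀ α ∈ Φ, ∀ β ∈ Φ, Submodule.reflection (ℝ ∙ α)ᗮ β ∈ Φ)
    (Δ : Finset E) (hΔΦ : Δ ⊆ Φ)
    (hpos : ∀ α ∈ Φ, (α ∈ Δ ∧ -α ∉ Δ) ∨ (α ∉ Δ ∧ -α ∈ Δ))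
    (k : E → ℂ)
    (hkeven : ∀ α ∈ Φ, k (-α) = k α)
    (hkinv : ∀ α ∈ Φ,
      ∀ g ∈ Subgroup.closure {g : E ≃ₗᵢ[ℝ] E | ∃ β ∈ Φ, g = Submodule.reflection (ℝ ∙ β)ᗮ},
        k (g α) = k α) :
    ∀ α ∈ Δ, ∀ P : Submodule ℝ E, Module.finrank ℝ P = 2 → α ∈ P →
      ⁅k α • MonoidAlgebra.of ℂ (E ≃ₗᵢ[ℝ] E) (Submodule.reflection (ℝ ∙ α)ᗮ),
       ∑ β ∈ Δ.filter (fun β => β ∈ P),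
         k β • MonoidAlgebra.of ℂ (E ≃ₗᵢ[ℝ] E) (Submodule.reflection (ℝ ∙ β)ᗮ)⁆ = 0 :=
  reflections_satisfy_holonomy_relations_general Φ hrefl Δ hΔΦ hpos k hkeven hkinv
end

section
/- Let L be a Lie algebra over ℂ with elements t_{ij} = t_{ji}, 1 ≤ i < j ≤ n, satisfying the Kohno–Drinfeld relations: [t_{ij}, t_{kl}] = 0 for distinct i, j, k, l, and [t_{ij}, t_{ik} + t_{jk}] = 0 for distinct i, j, k. Then for any pairwise distinct complex numbers z₁, …, z_n, the Gaudin hamiltonians H_i = Σ_{j ≠ i} t_{ij}/(z_i − z_j), i = 1, …, n, pairwise commute: [H_i, H_j] = 0 for all i, j. -/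
/-!
Expanding `⁅H_i, H_j⁆` bilinearly, the four-index relation kills every bracket `⁅t_ik, t_jl⁆`
with `i, j, k, l` distinct, and `⁅t_ij, t_ji⁆ = 0`. What remains is, for each `k ∉ {i, j}`,
three brackets which the three-index relations all express through `X = ⁅t_ij, t_ik⁆`;
their coefficients cancel by the partial-fraction identity
`1/((a-b)(b-c)) + 1/((a-c)(b-a)) = 1/((a-c)(b-c))`.
-/

open Finset

theorem sum_erase_sum_erase_eq_of_eq_zero {ι M : Type*} [Fintype ι] [DecidableEq ι]
    [AddCommMonoid M] {i j : ι} (hij : i ≠ j) (F : ι → ι → M) (hji : F j i = 0)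
    (hF : ∀ k l, k ≠ i → k ≠ j → l ≠ i → l ≠ j → k ≠ l → F k l = 0) :
    ∑ k ∈ univ.erase i, ∑ l ∈ univ.erase j, F k l =
      ∑ k ∈ (univ.erase i).erase j, (F j k + F k i + F k k) := by
  have row_j : ∑ l ∈ univ.erase j, F j l = ∑ l ∈ (univ.erase i).erase j, F j l := by
    rw [← add_sum_erase _ _ (mem_erase.mpr ⟨hij, mem_univ i⟩), hji, zero_add,
      erase_right_comm]
  have row_k : ∀ k ∈ (univ.erase i).erase j, ∑ l ∈ univ.erase j, F k l = F k i + F k k := by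
    intro k hk
    obtain ⟨hkj, hki⟩ : k ≠ j ∧ k ≠ i := by simpa using hk
    refine sum_eq_add_of_mem i k (by simp [hij]) (by simp [hkj]) hki.symm ?_
    intro l hl ⟨hli, hlk⟩
    exact hF k l hki hkj hli (ne_of_mem_erase hl) hlk.symm
  rw [← add_sum_erase _ _ (mem_erase.mpr ⟨hij.symm, mem_univ j⟩), row_j, sum_congr rfl row_k,
    ← sum_add_distrib]
  simp only [add_assoc]

theorem inv_sub_mul_inv_sub_add_inv_sub_mul_inv_sub {K : Type*} [Field K] {a b c : K}
    (hab : a ≠ b) (hac : a ≠ c) (hbc : b ≠ c) :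
    (b - c)⁻¹ * (a - b)⁻¹ + (b - a)⁻¹ * (a - c)⁻¹ = (b - c)⁻¹ * (a - c)⁻¹ := by
  have := sub_ne_zero.mpr hab
  have := sub_ne_zero.mpr hac
  have := sub_ne_zero.mpr hbc
  field_simp
  ring

namespace KohnoDrinfeld

variable {L : Type*} [LieRing L] {n : ℕ} {t : Fin n → Fin n → L}

theorem lie_tij_tjk (h3 : ∀ i j k : Fin n, i ≠ j → i ≠ k → j ≠ k →
      ⁅t i j, t i k + t j k⁆ = 0) {i j k : Fin n} (hij : i ≠ j) (hik : i ≠ k) (hjk : j ≠ k) :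
    ⁅t i j, t j k⁆ = -⁅t i j, t i k⁆ := by
  rw [eq_neg_iff_add_eq_zero, add_comm, ← lie_add]
  exact h3 i j k hij hik hjk

theorem lie_tik_tjk (hsymm : ∀ i j, t i j = t j i) (h3 : ∀ i j k : Fin n, i ≠ j → i ≠ k →
      j ≠ k → ⁅t i j, t i k + t j k⁆ = 0) {i j k : Fin n} (hij : i ≠ j) (hik : i ≠ k)
    (hjk : j ≠ k) :
    ⁅t i k, t j k⁆ = ⁅t i j, t i k⁆ := by
  rw [hsymm j k, lie_tij_tjk h3 hik hij hjk.symm]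
  exact lie_skew _ _

end KohnoDrinfeld

/-- Under the Kohno–Drinfeld relations, the Gaudin hamiltonians
`H_i = ∑_{j ≠ i} t_{ij}/(z_i − z_j)` pairwise commute, for any pairwise
distinct `z₁, …, z_n`. -/
theorem kohno_drinfeld_gaudin_commute
    {L : Type*} [LieRing L] [LieAlgebra ℂ L] {n : ℕ}
    (t : Fin n → Fin n → L)
    (hsymm : ∀ i j, t i j = t j i)
    (h4 : ∀ i j k l : Fin n, i ≠ j → i ≠ k → i ≠ l → j ≠ k → j ≠ l → k ≠ l →
      ⁅t i j, t k l⁆ = 0)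
    (h3 : ∀ i j k : Fin n, i ≠ j → i ≠ k → j ≠ k →
      ⁅t i j, t i k + t j k⁆ = 0)
    (z : Fin n → ℂ) (hz : Function.Injective z) :
    ∀ i j : Fin n,
      ⁅∑ k ∈ Finset.univ.erase i, (z i - z k)⁻¹ • t i k,
       ∑ k ∈ Finset.univ.erase j, (z j - z k)⁻¹ • t j k⁆ = 0 := by
  intro i j
  rcases eq_or_ne i j with rfl | hij
  · exact lie_self _
  simp only [sum_lie_sum, smul_lie, lie_smul, smul_smul]
  rw [sum_erase_sum_erase_eq_of_eq_zero hij _ (by simp [hsymm j i])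
    (fun k l hki hkj hli hlj hkl => by
      simp [h4 i k j l (Ne.symm hki) hij (Ne.symm hli) hkj hkl (Ne.symm hlj)])]
  refine sum_eq_zero fun k hk => ?_
  obtain ⟨hkj, hki⟩ : k ≠ j ∧ k ≠ i := by simpa using hk
  have hkij : ⁅t i k, t j i⁆ = -⁅t i j, t i k⁆ := by rw [hsymm j i, lie_skew]
  rw [KohnoDrinfeld.lie_tij_tjk h3 hij hki.symm hkj.symm, hkij,
    KohnoDrinfeld.lie_tik_tjk hsymm h3 hij hki.symm hkj.symm, smul_neg, smul_neg,
    ← inv_sub_mul_inv_sub_add_inv_sub_mul_inv_sub (hz.ne hij) (hz.ne hki.symm) (hz.ne hkj.symm),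
    add_smul]
  abel
end

section
/- Let L be a Lie algebra over ℂ with elements r_i, t_{ij} = t_{ji}, s_{ij} = s_{ji} (1 ≤ i < j ≤ n) satisfying the B_n holonomy relations. Let z₁, …, z_n be nonzero complex numbers with z_i ≠ z_j and z_i ≠ −z_j for all i ≠ j. Then the elements H(a) = Σ_i (a_i/z_i) r_i + Σ_{i<j} ((a_i − a_j)/(z_i − z_j)) t_{ij} + Σ_{i<j} ((a_i + a_j)/(z_i + z_j)) s_{ij}, a ∈ ℂⁿ, pairwise commute: [H(a), H(b)] = 0 for all a, b ∈ ℂⁿ. -/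
/-!
Put `H i = r i / z i + ∑_{j ≠ i} (t i j / (z i - z j) + s i j / (z i + z j))`; then
`H(a) = ∑ i, a i • H i`, so it suffices that `⁅H k, H l⁆ = 0` for `k ≠ l`. Think of `r i`, `t i j`,
`s i j` as attached to the hyperplanes `z i = 0`, `z i = z j`, `z i = -z j`. Generators whose
hyperplanes meet in no common rank-two flat commute, so the expansion of `⁅H k, H l⁆` splits into
one contribution per flat: `z k = z l = 0`, and for each third index `m` the four flats
`z k = ±z l = ±z m`. On each flat the holonomy relation identifies the brackets up to sign, and
the coefficients cancel by partial-fraction identities of Arnold type, such as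
`1 / ((x - y) (y - w)) = 1 / ((x - w) (x - y)) + 1 / ((x - w) (y - w))`.
-/

open Finset

section Lie

variable {R L : Type*} [CommRing R] [LieRing L] [LieAlgebra R L]

theorem lie_sum_smul_sum_smul_eq_zero {ι : Type*} [Fintype ι] {K : ι → L}
    (hK : ∀ i j, i ≠ j → ⁅K i, K j⁆ = 0) (a b : ι → R) :
    ⁅∑ i, a i • K i, ∑ j, b j • K j⁆ = 0 := by
  rw [sum_lie_sum]
  refine sum_eq_zero fun i _ => sum_eq_zero fun j _ => ?_
  obtain rfl | hij := eq_or_ne i j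
  · simp
  · simp [hK i j hij]

theorem lie_add_sum_add_sum {ι : Type*} {P Q : L} {f g : ι → L} {s : Finset ι}
    (hfg : ∀ i ∈ s, ∀ j ∈ s, i ≠ j → ⁅f i, g j⁆ = 0) :
    ⁅P + ∑ i ∈ s, f i, Q + ∑ i ∈ s, g i⁆
      = ⁅P, Q⁆ + ∑ i ∈ s, (⁅P, g i⁆ + ⁅f i, Q⁆ + ⁅f i, g i⁆) := by
  have diag : ∑ j ∈ s, ∑ i ∈ s, ⁅f i, g j⁆ = ∑ j ∈ s, ⁅f j, g j⁆ :=
    sum_congr rfl fun j hj => sum_eq_single_of_mem j hj fun i hi hij => hfg i hi j hj hij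
  simp only [add_lie, lie_add, lie_sum, sum_lie, diag, sum_add_distrib]
  abel

-- Both relations together give `⁅X, Y⁆ = ⁅Z, X⁆ = -⁅Z, Y⁆`.
theorem lie_triangle_eq_zero {X Y Z : L} (hX : ⁅X, Z + Y⁆ = 0) (hZ : ⁅Z, X + Y⁆ = 0)
    {α β γ : R} (h : α + β = γ) :
    α • ⁅X, Y⁆ + β • ⁅Z, X⁆ + γ • ⁅Z, Y⁆ = 0 := by
  rw [lie_add] at hX
  rw [lie_add, ← lie_skew Z X] at hZ
  rw [← h, ← lie_skew Z X]
  linear_combination (norm := module) α • hX + (α + β) • hZ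

end Lie

theorem sum_Ioi_add_smul_eq_sum_compl_smul {ι K M : Type*} [LinearOrder ι] [Fintype ι]
    [LocallyFiniteOrderTop ι] [LocallyFiniteOrderBot ι] [Semiring K] [AddCommMonoid M] [Module K M]
    {x : ι → ι → M} (hx : ∀ i j, x i j = x j i) (c : ι → ι → K) :
    ∑ i, ∑ j ∈ Ioi i, (c i j + c j i) • x i j = ∑ i, ∑ j ∈ {i}ᶜ, c i j • x i j := by
  rw [← sum_sum_Ioi_add_eq_sum_sum_off_diag]
  refine sum_congr rfl fun i _ => sum_congr rfl fun j _ => ?_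
  rw [add_smul, hx j i, add_comm]

theorem sum_compl_singleton_eq_add {ι M : Type*} [Fintype ι] [DecidableEq ι] [AddCommMonoid M]
    {k l : ι} (hkl : k ≠ l) (f : ι → M) :
    ∑ m ∈ {k}ᶜ, f m = f l + ∑ m ∈ {k, l}ᶜ, f m := by
  rw [← add_sum_erase _ _ (by simpa using hkl.symm : l ∈ ({k}ᶜ : Finset ι))]
  congr 2
  ext m
  simp [and_comm]

structure IsHolonomyB {ι L : Type*} [LieRing L] (r : ι → L) (t s : ι → ι → L) : Prop where
  t_symm : ∀ i j, t i j = t j i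
  s_symm : ∀ i j, s i j = s j i
  pair : ∀ i j, i ≠ j →
    ⁅r i, r j + t i j + s i j⁆ = 0 ∧ ⁅t i j, r i + r j + s i j⁆ = 0 ∧
      ⁅s i j, r i + r j + t i j⁆ = 0
  triple : ∀ i j k, i ≠ j → i ≠ k → j ≠ k →
    ⁅t i j, t i k + t j k⁆ = 0 ∧ ⁅t i j, s i k + s j k⁆ = 0 ∧ ⁅s i j, t i k + s j k⁆ = 0
  lie_r_eq_zero : ∀ i j k, i ≠ j → i ≠ k → j ≠ k → ⁅r i, t j k⁆ = 0 ∧ ⁅r i, s j k⁆ = 0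
  lie_eq_zero : ∀ i j k l, i ≠ j → i ≠ k → i ≠ l → j ≠ k → j ≠ l → k ≠ l →
    ⁅t i j, t k l⁆ = 0 ∧ ⁅t i j, s k l⁆ = 0 ∧ ⁅s i j, s k l⁆ = 0

section Field

variable {𝕜 L : Type*} [Field 𝕜] [LieRing L] [LieAlgebra 𝕜 L]

theorem lie_gaudin_rank_two {x y : 𝕜} (hx : x ≠ 0) (hy : y ≠ 0) (hxy : x ≠ y) (hxy' : x ≠ -y)
    {A B T S : L} (hA : ⁅A, B + T + S⁆ = 0) (hT : ⁅T, A + B + S⁆ = 0) (hS : ⁅S, A + B + T⁆ = 0) :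
    ⁅x⁻¹ • A + ((x - y)⁻¹ • T + (x + y)⁻¹ • S), y⁻¹ • B + ((y - x)⁻¹ • T + (y + x)⁻¹ • S)⁆ = 0 := by
  have h₁ : x - y ≠ 0 := sub_ne_zero.2 hxy
  have h₂ : y - x ≠ 0 := sub_ne_zero.2 hxy.symm
  have h₃ : x + y ≠ 0 := fun hsum => hxy' (eq_neg_of_add_eq_zero_left hsum)
  have h₄ : y + x ≠ 0 := by rwa [add_comm]
  simp only [lie_add] at hA hT hS
  rw [← lie_skew T A] at hT
  rw [← lie_skew S A, ← lie_skew S T] at hS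
  simp only [lie_add, add_lie, lie_smul, smul_lie, lie_self, smul_zero, ← lie_skew S T]
  linear_combination (norm := skip) (x⁻¹ * y⁻¹) • hA + ((x - y)⁻¹ * y⁻¹) • hT
    + ((x + y)⁻¹ * y⁻¹) • hS
  match_scalars <;> field_simp <;> ring

variable {ι : Type*} (r : ι → L) (t s : ι → ι → L) (z : ι → 𝕜)

def gaudinTerm (i j : ι) : L := (z i - z j)⁻¹ • t i j + (z i + z j)⁻¹ • s i j

def gaudinHamiltonian [Fintype ι] [DecidableEq ι] (i : ι) : L :=
  (z i)⁻¹ • r i + ∑ j ∈ {i}ᶜ, gaudinTerm t s z i j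

variable {r t s z}

theorem sum_gaudin_eq_sum_smul_gaudinHamiltonian [LinearOrder ι] [Fintype ι]
    [LocallyFiniteOrderTop ι] [LocallyFiniteOrderBot ι]
    (ht : ∀ i j, t i j = t j i) (hs : ∀ i j, s i j = s j i) (a : ι → 𝕜) :
    (∑ i, (a i / z i) • r i) +
      (∑ i, ∑ j ∈ univ.filter (fun j => i < j), ((a i - a j) / (z i - z j)) • t i j) +
      (∑ i, ∑ j ∈ univ.filter (fun j => i < j), ((a i + a j) / (z i + z j)) • s i j)
    = ∑ i, a i • gaudinHamiltonian r t s z i := by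
  have hsub : ∀ i j, (a i - a j) / (z i - z j) = a i * (z i - z j)⁻¹ + a j * (z j - z i)⁻¹ := by
    intro i j
    rw [← neg_sub (z i), inv_neg]
    ring
  have hadd : ∀ i j, (a i + a j) / (z i + z j) = a i * (z i + z j)⁻¹ + a j * (z j + z i)⁻¹ := by
    intro i j
    rw [add_comm (z j)]
    ring
  simp only [filter_lt_eq_Ioi, hsub, hadd, sum_Ioi_add_smul_eq_sum_compl_smul ht,
    sum_Ioi_add_smul_eq_sum_compl_smul hs, gaudinHamiltonian, gaudinTerm, smul_add, smul_sum,
    smul_smul, sum_add_distrib, div_eq_mul_inv, add_assoc]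

namespace IsHolonomyB

variable (h : IsHolonomyB r t s)
include h

theorem lie_r_gaudinTerm_eq_zero {i j k : ι} (hij : i ≠ j) (hik : i ≠ k) (hjk : j ≠ k) :
    ⁅r i, gaudinTerm t s z j k⁆ = 0 := by
  simp [gaudinTerm, h.lie_r_eq_zero i j k hij hik hjk]

theorem lie_gaudinTerm_gaudinTerm_eq_zero {i j k l : ι} (hij : i ≠ j) (hik : i ≠ k) (hil : i ≠ l)
    (hjk : j ≠ k) (hjl : j ≠ l) (hkl : k ≠ l) :
    ⁅gaudinTerm t s z i j, gaudinTerm t s z k l⁆ = 0 := by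
  have hst : ⁅s i j, t k l⁆ = 0 := by
    rw [← lie_skew, (h.lie_eq_zero k l i j hkl hik.symm hjk.symm hil.symm hjl.symm hij).2.1,
      neg_zero]
  simp [gaudinTerm, h.lie_eq_zero i j k l hij hik hil hjk hjl hkl, hst]

theorem lie_gaudinTerm_rank_three (hz : ∀ i j, i ≠ j → z i ≠ z j ∧ z i ≠ -z j) {k l m : ι}
    (hkl : k ≠ l) (hkm : k ≠ m) (hlm : l ≠ m) :
    ⁅gaudinTerm t s z k l, gaudinTerm t s z l m⁆ + ⁅gaudinTerm t s z k m, gaudinTerm t s z l k⁆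
      + ⁅gaudinTerm t s z k m, gaudinTerm t s z l m⁆ = 0 := by
  have hsub : ∀ {i j}, i ≠ j → z i - z j ≠ 0 := fun hij => sub_ne_zero.2 (hz _ _ hij).1
  have hadd : ∀ {i j}, i ≠ j → z i + z j ≠ 0 := fun hij hsum =>
    (hz _ _ hij).2 (eq_neg_of_add_eq_zero_left hsum)
  have := hsub hkl; have := hsub hkl.symm; have := hsub hkm; have := hsub hlm
  have := hadd hkl; have := hadd hkl.symm; have := hadd hkm; have := hadd hlm
  obtain ⟨ttX, tsX, stX⟩ := h.triple k l m hkl hkm hlm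
  obtain ⟨ttZ, tsZ, stZ⟩ := h.triple k m l hkm hkl hlm.symm
  obtain ⟨-, -, stX'⟩ := h.triple l k m hkl.symm hlm hkm
  obtain ⟨-, -, stZ'⟩ := h.triple m k l hkm.symm hlm.symm hkl
  simp only [h.t_symm m l, h.s_symm m l, h.s_symm l k, h.s_symm m k] at ttZ tsZ stZ stX' stZ'
  rw [add_comm] at stX' stZ'
  -- One triangle for each of the flats `z k = z l = z m`, `z k = z l = -z m`, `z k = z m = -z l`
  -- and `z l = z m = -z k`.
  have flat_eq := lie_triangle_eq_zero ttX ttZ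
    (α := (z k - z l)⁻¹ * (z l - z m)⁻¹) (β := (z k - z m)⁻¹ * (z l - z k)⁻¹)
    (γ := (z k - z m)⁻¹ * (z l - z m)⁻¹) (by field_simp; ring)
  have flat_kl := lie_triangle_eq_zero tsX stZ
    (α := (z k - z l)⁻¹ * (z l + z m)⁻¹) (β := (z k + z m)⁻¹ * (z l - z k)⁻¹)
    (γ := (z k + z m)⁻¹ * (z l + z m)⁻¹) (by field_simp; ring)
  have flat_km := lie_triangle_eq_zero stX tsZ
    (α := (z k + z l)⁻¹ * (z l + z m)⁻¹) (β := (z k - z m)⁻¹ * (z l + z k)⁻¹)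
    (γ := (z k - z m)⁻¹ * (z l + z m)⁻¹) (by field_simp; ring)
  have flat_lm := lie_triangle_eq_zero stX' stZ'
    (α := (z k + z l)⁻¹ * (z l - z m)⁻¹) (β := (z k + z m)⁻¹ * (z l + z k)⁻¹)
    (γ := (z k + z m)⁻¹ * (z l - z m)⁻¹) (by field_simp; ring)
  simp only [gaudinTerm, h.t_symm l k, h.s_symm l k, lie_add, add_lie, lie_smul, smul_lie]
  linear_combination (norm := module) flat_eq + flat_kl + flat_km + flat_lm

theorem lie_gaudinHamiltonian_eq_zero [Fintype ι] [DecidableEq ι] (hz0 : ∀ i, z i ≠ 0)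
    (hz : ∀ i j, i ≠ j → z i ≠ z j ∧ z i ≠ -z j) {k l : ι} (hkl : k ≠ l) :
    ⁅gaudinHamiltonian r t s z k, gaudinHamiltonian r t s z l⁆ = 0 := by
  have split : ∀ {i j}, i ≠ j → gaudinHamiltonian r t s z i
      = ((z i)⁻¹ • r i + gaudinTerm t s z i j) + ∑ m ∈ {i, j}ᶜ, gaudinTerm t s z i m :=
    fun hij => by rw [gaudinHamiltonian, sum_compl_singleton_eq_add hij, add_assoc]
  rw [split hkl, split hkl.symm, pair_comm l k, lie_add_sum_add_sum]
  · have rank_two : ⁅(z k)⁻¹ • r k + gaudinTerm t s z k l, (z l)⁻¹ • r l + gaudinTerm t s z l k⁆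
        = 0 := by
      obtain ⟨hr, ht, hs⟩ := h.pair k l hkl
      simpa only [gaudinTerm, h.t_symm l k, h.s_symm l k] using
        lie_gaudin_rank_two (hz0 k) (hz0 l) (hz k l hkl).1 (hz k l hkl).2 hr ht hs
    rw [rank_two, zero_add]
    refine sum_eq_zero fun m hm => ?_
    simp only [mem_compl, mem_insert, mem_singleton, not_or] at hm
    have hrl : ⁅gaudinTerm t s z k m, r l⁆ = 0 := by
      rw [← lie_skew, h.lie_r_gaudinTerm_eq_zero hkl.symm (Ne.symm hm.2) (Ne.symm hm.1), neg_zero]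
    simp only [add_lie, lie_add, smul_lie, lie_smul,
      h.lie_r_gaudinTerm_eq_zero hkl (Ne.symm hm.1) (Ne.symm hm.2), hrl, smul_zero, zero_add]
    simpa only [add_assoc] using
      h.lie_gaudinTerm_rank_three hz hkl (Ne.symm hm.1) (Ne.symm hm.2)
  · intro i hi j hj hij
    simp only [mem_compl, mem_insert, mem_singleton, not_or] at hi hj
    exact h.lie_gaudinTerm_gaudinTerm_eq_zero (Ne.symm hi.1) hkl (Ne.symm hj.1) hi.2 hij
      (Ne.symm hj.2)

end IsHolonomyB

end Field

/-- Under the `B_n` holonomy relations, the Gaudin hamiltonians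
`H(a) = ∑ (a_i/z_i) r_i + ∑_{i<j} ((a_i−a_j)/(z_i−z_j)) t_{ij}
      + ∑_{i<j} ((a_i+a_j)/(z_i+z_j)) s_{ij}` pairwise commute. -/
theorem bn_gaudin_commute
    {L : Type*} [LieRing L] [LieAlgebra ℂ L] {n : ℕ}
    (r : Fin n → L) (t s : Fin n → Fin n → L)
    (htsymm : ∀ i j, t i j = t j i) (hssymm : ∀ i j, s i j = s j i)
    (hB2 : ∀ i j : Fin n, i ≠ j →
      ⁅r i, r j + t i j + s i j⁆ = 0 ∧
      ⁅t i j, r i + r j + s i j⁆ = 0 ∧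
      ⁅s i j, r i + r j + t i j⁆ = 0)
    (hA2 : ∀ i j k : Fin n, i ≠ j → i ≠ k → j ≠ k →
      ⁅t i j, t i k + t j k⁆ = 0 ∧
      ⁅t i j, s i k + s j k⁆ = 0 ∧
      ⁅s i j, t i k + s j k⁆ = 0)
    (hA1r : ∀ i j k : Fin n, i ≠ j → i ≠ k → j ≠ k →
      ⁅r i, t j k⁆ = 0 ∧ ⁅r i, s j k⁆ = 0)
    (hA1 : ∀ i j k l : Fin n, i ≠ j → i ≠ k → i ≠ l → j ≠ k → j ≠ l → k ≠ l →
      ⁅t i j, t k l⁆ = 0 ∧ ⁅t i j, s k l⁆ = 0 ∧ ⁅s i j, s k l⁆ = 0)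
    (z : Fin n → ℂ) (hz0 : ∀ i, z i ≠ 0)
    (hz : ∀ i j : Fin n, i ≠ j → z i ≠ z j ∧ z i ≠ -z j)
    (a b : Fin n → ℂ) :
    ⁅(∑ i, (a i / z i) • r i) +
       (∑ i, ∑ j ∈ Finset.univ.filter (fun j => i < j),
         ((a i - a j) / (z i - z j)) • t i j) +
       (∑ i, ∑ j ∈ Finset.univ.filter (fun j => i < j),
         ((a i + a j) / (z i + z j)) • s i j),
     (∑ i, (b i / z i) • r i) +
       (∑ i, ∑ j ∈ Finset.univ.filter (fun j => i < j),
         ((b i - b j) / (z i - z j)) • t i j) +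
       (∑ i, ∑ j ∈ Finset.univ.filter (fun j => i < j),
         ((b i + b j) / (z i + z j)) • s i j)⁆ = 0 := by
  have h : IsHolonomyB r t s := ⟨htsymm, hssymm, hB2, hA2, hA1r, hA1⟩
  rw [sum_gaudin_eq_sum_smul_gaudinHamiltonian htsymm hssymm,
    sum_gaudin_eq_sum_smul_gaudinHamiltonian htsymm hssymm]
  exact lie_sum_smul_sum_smul_eq_zero (fun _ _ hkl => h.lie_gaudinHamiltonian_eq_zero hz0 hz hkl) a b
end

section
/- Let L be a Lie algebra over ℂ with elements r_i, t_{ij} = t_{ji}, s_{ij} = s_{ji} (1 ≤ i < j ≤ n) satisfying the B_n holonomy relations. Let z₁, …, z_n be pairwise distinct nonzero complex numbers. Then the elements H^A(a) = Σ_i (a_i/z_i) r_i + Σ_{i<j} ((a_i − a_j)/(z_i − z_j)) (t_{ij} + s_{ij}), a ∈ ℂⁿ, pairwise commute: [H^A(a), H^A(b)] = 0 for all a, b ∈ ℂⁿ. -/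
/-!
Add a point `0` with `z₀ = 0` and set `t₀ᵢ = rᵢ`, `uᵢⱼ = tᵢⱼ + sᵢⱼ`. The `B_n` relations imply
that `t₀ᵢ, uᵢⱼ` satisfy the infinitesimal braid relations on the `n + 1` points `0, 1, …, n`, and
`H^A(a) = ∑ᵢ aᵢ Kᵢ` where `Kᵢ = ∑_{j ≠ i} tᵢⱼ / (zᵢ - zⱼ)` are the Gaudin Hamiltonians of the points
`0, z₁, …, zₙ`. So it suffices that Gaudin Hamiltonians commute: in `⁅Kᵢ, Kₖ⁆` the brackets of
disjoint pairs vanish, and for each third point `m` the braid relations make the brackets of two of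
`tᵢₖ, tᵢₘ, tₖₘ` all equal to `±⁅tᵢₖ, tᵢₘ⁆`, with coefficients cancelling by
`1/((x-y)(y-w)) + 1/((y-w)(w-x)) + 1/((w-x)(x-y)) = 0`.
-/

open Finset

section SumLt

variable {ι M : Type*} [LinearOrder ι] [Fintype ι] [AddCommMonoid M]

theorem Finset.sum_sum_eq_sum_sum_lt_add_swap {f : ι → ι → M} (hf : ∀ i, f i i = 0) :
    ∑ i, ∑ j, f i j = ∑ i, ∑ j ∈ univ.filter (fun j => i < j), (f i j + f j i) := by
  have hsplit : ∀ i j, f i j = (if i < j then f i j else 0) + (if j < i then f i j else 0) := by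
    intro i j
    rcases lt_trichotomy i j with h | rfl | h
    · simp [h, h.not_gt]
    · simp [hf]
    · simp [h, h.not_gt]
  simp only [sum_filter, sum_add_distrib]
  rw [sum_comm (f := fun i j => if i < j then f j i else 0), ← sum_add_distrib]
  refine sum_congr rfl fun i _ => ?_
  rw [← sum_add_distrib]
  exact sum_congr rfl fun j _ => hsplit i j

end SumLt

-- The diagonal term drops out because `(z i - z i)⁻¹ = 0`.
def gaudin {ι 𝕜 M : Type*} [Fintype ι] [Field 𝕜] [AddCommGroup M] [Module 𝕜 M] (z : ι → 𝕜)
    (t : ι → ι → M) (i : ι) : M :=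
  ∑ j, (z i - z j)⁻¹ • t i j

structure IsInfinitesimalBraid {ι L : Type*} [LieRing L] (t : ι → ι → L) : Prop where
  symm : ∀ i j, t i j = t j i
  lie_add_eq_zero : ∀ i j k, i ≠ j → i ≠ k → j ≠ k → ⁅t i j, t i k + t j k⁆ = 0
  lie_eq_zero : ∀ i j k l, i ≠ j → i ≠ k → i ≠ l → j ≠ k → j ≠ l → k ≠ l → ⁅t i j, t k l⁆ = 0

namespace IsInfinitesimalBraid

variable {ι 𝕜 L : Type*} [Field 𝕜] [LieRing L] [LieAlgebra 𝕜 L] {t : ι → ι → L}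

theorem lie_eq_lie (ht : IsInfinitesimalBraid t) {i j k : ι} (hij : i ≠ j) (hik : i ≠ k)
    (hjk : j ≠ k) : ⁅t i j, t j k⁆ = ⁅t i k, t i j⁆ := by
  have h := ht.lie_add_eq_zero i j k hij hik hjk
  rw [lie_add] at h
  rw [eq_neg_of_add_eq_zero_right h, lie_skew]

theorem gaudin_cycle_eq_zero (ht : IsInfinitesimalBraid t) {z : ι → 𝕜}
    (hz : Function.Injective z) {i k m : ι} (hik : i ≠ k) (hmi : m ≠ i) (hmk : m ≠ k) :
    (z i - z m)⁻¹ • (z k - z i)⁻¹ • ⁅t i m, t k i⁆ + (z i - z m)⁻¹ • (z k - z m)⁻¹ • ⁅t i m, t k m⁆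
      + (z i - z k)⁻¹ • (z k - z m)⁻¹ • ⁅t i k, t k m⁆ = 0 := by
  have hzik : z i - z k ≠ 0 := sub_ne_zero.mpr (hz.ne hik)
  have hzim : z i - z m ≠ 0 := sub_ne_zero.mpr (hz.ne hmi.symm)
  have hzkm : z k - z m ≠ 0 := sub_ne_zero.mpr (hz.ne hmk.symm)
  have hcoef : (z i - z m)⁻¹ * (z k - z m)⁻¹ - (z i - z m)⁻¹ * (z k - z i)⁻¹
      - (z i - z k)⁻¹ * (z k - z m)⁻¹ = 0 := by
    rw [← neg_sub (z i) (z k), inv_neg]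
    field_simp
    ring
  rw [ht.symm k i, ht.lie_eq_lie hik hmi.symm hmk.symm, ht.symm k m,
    ht.lie_eq_lie hmi.symm hik hmk, ← lie_skew (t i m) (t i k)]
  calc _ = ((z i - z m)⁻¹ * (z k - z m)⁻¹ - (z i - z m)⁻¹ * (z k - z i)⁻¹
        - (z i - z k)⁻¹ * (z k - z m)⁻¹) • ⁅t i k, t i m⁆ := by module
    _ = 0 := by rw [hcoef, zero_smul]

variable [Fintype ι]

theorem lie_gaudin_eq_zero (ht : IsInfinitesimalBraid t) {z : ι → 𝕜}
    (hz : Function.Injective z) (i k : ι) : ⁅gaudin z t i, gaudin z t k⁆ = 0 := by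
  classical
  rcases eq_or_ne i k with rfl | hik
  · exact lie_self _
  set g : ι → ι → L := fun j l => (z i - z j)⁻¹ • (z k - z l)⁻¹ • ⁅t i j, t k l⁆ with hg
  have hgi : ∀ l, g i l = 0 := fun l => by simp [hg]
  have hgk : ∀ j, g j k = 0 := fun j => by simp [hg]
  have hgki : g k i = 0 := by simp [hg, ht.symm k i]
  -- `⁅t i j, t k l⁆` with `j ≠ i`, `l ≠ k` vanishes unless the two pairs share an index.
  have hsplit : ∀ j l, g j l = (if l = i then g j i else 0) + (if l = j then g j j else 0)
      + (if j = k then g k l else 0) := by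
    intro j l
    by_cases hji : j = i
    · subst hji; simp [hgi, hik]
    by_cases hjk : j = k
    · subst hjk; by_cases hli : l = i <;> by_cases hlj : l = j <;> simp_all
    by_cases hli : l = i
    · subst hli; simp [hjk, Ne.symm hji]
    by_cases hlj : l = j
    · subst hlj; simp [hli, hjk]
    by_cases hlk : l = k
    · subst hlk; simp [hgk, hli, hlj, hjk]
    simp only [hli, hlj, hjk, if_false, add_zero, hg]
    rw [ht.lie_eq_zero i j k l (Ne.symm hji) hik (Ne.symm hli) hjk (Ne.symm hlj) (Ne.symm hlk),
      smul_zero, smul_zero]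
  have hcycle : ∀ m, g m i + g m m + g k m = 0 := by
    intro m
    by_cases hmi : m = i
    · subst hmi; simp [hgi, hgki]
    by_cases hmk : m = k
    · subst hmk; simp [hgk, hgki]
    exact ht.gaudin_cycle_eq_zero hz hik hmi hmk
  calc ⁅gaudin z t i, gaudin z t k⁆ = ∑ j, ∑ l, g j l := by
        simp only [gaudin, sum_lie_sum, smul_lie, hg]
        simp only [lie_smul]
    _ = ∑ m, (g m i + g m m + g k m) := by
        rw [sum_congr rfl fun j _ => sum_congr rfl fun l _ => hsplit j l]
        simp [sum_add_distrib]
    _ = 0 := sum_eq_zero fun m _ => hcycle m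

end IsInfinitesimalBraid

def withBasePoint {ι M : Type*} [Zero M] (r : ι → M) (u : ι → ι → M) :
    Option ι → Option ι → M
  | some i, some j => u i j
  | some i, none => r i
  | none, some j => r j
  | none, none => 0

theorem isInfinitesimalBraid_withBasePoint {ι L : Type*} [LieRing L] {r : ι → L} {u : ι → ι → L}
    (hu : IsInfinitesimalBraid u)
    (hr : ∀ i j, i ≠ j → ⁅r i, r j + u i j⁆ = 0)
    (hur : ∀ i j, i ≠ j → ⁅u i j, r i + r j⁆ = 0)
    (hru : ∀ i j k, i ≠ j → i ≠ k → j ≠ k → ⁅r i, u j k⁆ = 0) :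
    IsInfinitesimalBraid (withBasePoint r u) where
  symm i j := by
    rcases i with _ | i <;> rcases j with _ | j <;> simp only [withBasePoint]
    exact hu.symm i j
  lie_add_eq_zero i j k := by
    rcases i with _ | i <;> rcases j with _ | j <;> rcases k with _ | k <;>
      simp only [withBasePoint, ne_eq, reduceCtorEq, not_true, not_false_eq_true, Option.some.injEq,
        IsEmpty.forall_iff, forall_true_left]
    · exact hr j k
    · intro hik; rw [add_comm]; exact hr i k hik
    · exact hur i j
    · exact hu.lie_add_eq_zero i j k
  lie_eq_zero i j k l := by
    rcases i with _ | i <;> rcases j with _ | j <;> rcases k with _ | k <;> rcases l with _ | l <;>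
      simp only [withBasePoint, ne_eq, reduceCtorEq, not_true, not_false_eq_true, Option.some.injEq,
        IsEmpty.forall_iff, forall_true_left, implies_true]
    · exact hru j k l
    · exact hru i k l
    · intro hij hil hjl
      rw [← lie_skew, hru l i j (Ne.symm hil) (Ne.symm hjl) hij, neg_zero]
    · intro hij hik hjk
      rw [← lie_skew, hru k i j (Ne.symm hik) (Ne.symm hjk) hij, neg_zero]
    · exact hu.lie_eq_zero i j k l

theorem sum_smul_gaudin_withBasePoint {ι 𝕜 M : Type*} [Fintype ι] [LinearOrder ι] [Field 𝕜]
    [AddCommGroup M] [Module 𝕜 M] (r : ι → M) {u : ι → ι → M} (hu : ∀ i j, u i j = u j i)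
    (z c : ι → 𝕜) :
    ∑ i, c i • gaudin (Option.elim' 0 z) (withBasePoint r u) (some i) =
      ∑ i, (c i / z i) • r i +
        ∑ i, ∑ j ∈ univ.filter (fun j => i < j), ((c i - c j) / (z i - z j)) • u i j := by
  have hdiag : ∀ i, c i • (z i - z i)⁻¹ • u i i = 0 := by simp
  calc ∑ i, c i • gaudin (Option.elim' 0 z) (withBasePoint r u) (some i)
      = ∑ i, ((c i / z i) • r i + ∑ j, c i • (z i - z j)⁻¹ • u i j) := by
        simp [gaudin, Fintype.sum_option, withBasePoint, smul_add, smul_sum, smul_smul,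
          div_eq_mul_inv]
    _ = _ := by
        rw [sum_add_distrib, sum_sum_eq_sum_sum_lt_add_swap hdiag]
        refine congrArg _ (sum_congr rfl fun i _ => sum_congr rfl fun j _ => ?_)
        rw [hu j i, ← neg_sub (z i) (z j), inv_neg]
        module

section Bn

variable {ι L : Type*} [LieRing L]

structure IsBnHolonomy (r : ι → L) (t s : ι → ι → L) : Prop where
  symm_t : ∀ i j, t i j = t j i
  symm_s : ∀ i j, s i j = s j i
  lie_pair : ∀ i j, i ≠ j →
    ⁅r i, r j + t i j + s i j⁆ = 0 ∧ ⁅t i j, r i + r j + s i j⁆ = 0 ∧ ⁅s i j, r i + r j + t i j⁆ = 0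
  lie_triple : ∀ i j k, i ≠ j → i ≠ k → j ≠ k →
    ⁅t i j, t i k + t j k⁆ = 0 ∧ ⁅t i j, s i k + s j k⁆ = 0 ∧ ⁅s i j, t i k + s j k⁆ = 0
  lie_r_of_ne : ∀ i j k, i ≠ j → i ≠ k → j ≠ k → ⁅r i, t j k⁆ = 0 ∧ ⁅r i, s j k⁆ = 0
  lie_of_ne : ∀ i j k l, i ≠ j → i ≠ k → i ≠ l → j ≠ k → j ≠ l → k ≠ l →
    ⁅t i j, t k l⁆ = 0 ∧ ⁅t i j, s k l⁆ = 0 ∧ ⁅s i j, s k l⁆ = 0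

namespace IsBnHolonomy

variable {r : ι → L} {t s : ι → ι → L}

theorem isInfinitesimalBraid_add (h : IsBnHolonomy r t s) :
    IsInfinitesimalBraid fun i j => t i j + s i j where
  symm i j := by rw [h.symm_t i j, h.symm_s i j]
  lie_add_eq_zero i j k hij hik hjk := by
    obtain ⟨htt, hts, hst⟩ := h.lie_triple i j k hij hik hjk
    have hst' := (h.lie_triple j i k (Ne.symm hij) hjk hik).2.2
    rw [h.symm_s j i] at hst'
    calc ⁅t i j + s i j, t i k + s i k + (t j k + s j k)⁆
        = ⁅t i j, t i k + t j k⁆ + ⁅t i j, s i k + s j k⁆ + ⁅s i j, t i k + s j k⁆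
          + ⁅s i j, t j k + s i k⁆ := by
          simp only [lie_add, add_lie]; abel
      _ = 0 := by rw [htt, hts, hst, hst']; simp
  lie_eq_zero i j k l hij hik hil hjk hjl hkl := by
    obtain ⟨htt, hts, hss⟩ := h.lie_of_ne i j k l hij hik hil hjk hjl hkl
    have hst : ⁅s i j, t k l⁆ = 0 := by
      rw [← lie_skew, (h.lie_of_ne k l i j hkl (Ne.symm hik) (Ne.symm hjk) (Ne.symm hil)
        (Ne.symm hjl) hij).2.1, neg_zero]
    simp only [lie_add, add_lie, htt, hts, hst, hss, add_zero]

theorem isInfinitesimalBraid_withBasePoint (h : IsBnHolonomy r t s) :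
    IsInfinitesimalBraid (withBasePoint r fun i j => t i j + s i j) := by
  refine _root_.isInfinitesimalBraid_withBasePoint h.isInfinitesimalBraid_add
    (fun i j hij => by rw [← add_assoc]; exact (h.lie_pair i j hij).1) (fun i j hij => ?_)
    (fun i j k hij hik hjk => ?_)
  · obtain ⟨-, htr, hsr⟩ := h.lie_pair i j hij
    calc ⁅t i j + s i j, r i + r j⁆
        = ⁅t i j, r i + r j + s i j⁆ + ⁅s i j, r i + r j + t i j⁆
          - (⁅t i j, s i j⁆ + ⁅s i j, t i j⁆) := by
          simp only [lie_add, add_lie]; abel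
      _ = 0 := by rw [htr, hsr, ← lie_skew (s i j), add_neg_cancel, sub_zero, add_zero]
  · obtain ⟨hrt, hrs⟩ := h.lie_r_of_ne i j k hij hik hjk
    rw [lie_add, hrt, hrs, add_zero]

end IsBnHolonomy

end Bn

/-- Under the `B_n` holonomy relations, the elements
`H^A(a) = ∑ (a_i/z_i) r_i + ∑_{i<j} ((a_i−a_j)/(z_i−z_j)) (t_{ij}+s_{ij})`
pairwise commute, for pairwise distinct nonzero `z₁, …, z_n`. -/
theorem bn_second_family_commute
    {L : Type*} [LieRing L] [LieAlgebra ℂ L] {n : ℕ}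
    (r : Fin n → L) (t s : Fin n → Fin n → L)
    (htsymm : ∀ i j, t i j = t j i) (hssymm : ∀ i j, s i j = s j i)
    (hB2 : ∀ i j : Fin n, i ≠ j →
      ⁅r i, r j + t i j + s i j⁆ = 0 ∧
      ⁅t i j, r i + r j + s i j⁆ = 0 ∧
      ⁅s i j, r i + r j + t i j⁆ = 0)
    (hA2 : ∀ i j k : Fin n, i ≠ j → i ≠ k → j ≠ k →
      ⁅t i j, t i k + t j k⁆ = 0 ∧
      ⁅t i j, s i k + s j k⁆ = 0 ∧
      ⁅s i j, t i k + s j k⁆ = 0)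
    (hA1r : ∀ i j k : Fin n, i ≠ j → i ≠ k → j ≠ k →
      ⁅r i, t j k⁆ = 0 ∧ ⁅r i, s j k⁆ = 0)
    (hA1 : ∀ i j k l : Fin n, i ≠ j → i ≠ k → i ≠ l → j ≠ k → j ≠ l → k ≠ l →
      ⁅t i j, t k l⁆ = 0 ∧ ⁅t i j, s k l⁆ = 0 ∧ ⁅s i j, s k l⁆ = 0)
    (z : Fin n → ℂ) (hz0 : ∀ i, z i ≠ 0)
    (hz : ∀ i j : Fin n, i ≠ j → z i ≠ z j)
    (a b : Fin n → ℂ) :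
    ⁅(∑ i, (a i / z i) • r i) +
       (∑ i, ∑ j ∈ Finset.univ.filter (fun j => i < j),
         ((a i - a j) / (z i - z j)) • (t i j + s i j)),
     (∑ i, (b i / z i) • r i) +
       (∑ i, ∑ j ∈ Finset.univ.filter (fun j => i < j),
         ((b i - b j) / (z i - z j)) • (t i j + s i j))⁆ = 0 := by
  have hB : IsBnHolonomy r t s := ⟨htsymm, hssymm, hB2, hA2, hA1r, hA1⟩
  have hz' : Function.Injective (Option.elim' 0 z) := by
    rintro (_ | i) (_ | j) hij
    · rfl
    · exact absurd hij.symm (hz0 j)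
    · exact absurd hij (hz0 i)
    · exact congrArg some (not_imp_not.mp (hz i j) hij)
  have hcomm := hB.isInfinitesimalBraid_withBasePoint.lie_gaudin_eq_zero hz'
  rw [← sum_smul_gaudin_withBasePoint r hB.isInfinitesimalBraid_add.symm z a,
    ← sum_smul_gaudin_withBasePoint r hB.isInfinitesimalBraid_add.symm z b, sum_lie_sum]
  simp only [smul_lie, lie_smul, hcomm, smul_zero, sum_const_zero]
end

section
/- Let L be a Lie algebra over ℂ with elements r_i, t_{ij} = t_{ji}, s_{ij} = s_{ji} (1 ≤ i < j ≤ 3) satisfying the B₃ holonomy relations. Set c_Δ = r₁ + r₂ + r₃ + Σ_{i<j}(t_{ij} + s_{ij}) and, for 1 ≤ i < j ≤ 3, c_{ij} = r_i + r_j + t_{ij} + s_{ij}. Then for any (x_i, x_j, x_{ij}) ∈ ℂ³, the three elements c_Δ, c_{ij}, and x_i r_i + x_j r_j + x_{ij} t_{ij} pairwise commute, so their span is an abelian Lie subalgebra. -/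
/-!
Bracketing any generator `r_i`, `t_ij` or `s_ij` with `c_Δ` and distributing, the terms regroup
into brackets that vanish by the holonomy relations, so `c_Δ` commutes with every generator.
Likewise the `B₂` relations say exactly that `c_ij` commutes with `r_i`, `r_j` and `t_ij`.
Hence the three elements pairwise commute, and a span of pairwise commuting elements is abelian.
-/

open Finset

theorem lie_eq_zero_of_mem_span {R L : Type*} [CommRing R] [LieRing L] [LieAlgebra R L]
    {S : Set L} (hS : ∀ a ∈ S, ∀ b ∈ S, ⁅a, b⁆ = 0) {x y : L}
    (hx : x ∈ Submodule.span R S) (hy : y ∈ Submodule.span R S) : ⁅x, y⁆ = 0 := by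
  have := (LieSubalgebra.isLieAbelian_lieSpan_iff (R := R)).mpr hS
  let x' : LieSubalgebra.lieSpan R L S := ⟨x, LieSubalgebra.submodule_span_le_lieSpan hx⟩
  let y' : LieSubalgebra.lieSpan R L S := ⟨y, LieSubalgebra.submodule_span_le_lieSpan hy⟩
  simpa [x', y', Subtype.ext_iff] using trivial_lie_zero _ _ x' y'

theorem lie_eq_zero_of_mem_span_triple {R L : Type*} [CommRing R] [LieRing L] [LieAlgebra R L]
    {a b c : L} (hab : ⁅a, b⁆ = 0) (hac : ⁅a, c⁆ = 0) (hbc : ⁅b, c⁆ = 0) :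
    ∀ x ∈ Submodule.span R {a, b, c}, ∀ y ∈ Submodule.span R {a, b, c}, ⁅x, y⁆ = 0 := by
  have hba : ⁅b, a⁆ = 0 := by rw [← lie_skew, hab, neg_zero]
  have hca : ⁅c, a⁆ = 0 := by rw [← lie_skew, hac, neg_zero]
  have hcb : ⁅c, b⁆ = 0 := by rw [← lie_skew, hbc, neg_zero]
  refine fun x hx y hy ↦ lie_eq_zero_of_mem_span ?_ hx hy
  simp only [Set.mem_insert_iff, Set.mem_singleton_iff]
  rintro _ (rfl | rfl | rfl) _ (rfl | rfl | rfl) <;> first | exact lie_self _ | assumption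

namespace Fin

theorem exists_ne_and_ne (i j : Fin 3) : ∃ k, i ≠ k ∧ j ≠ k := by
  revert i j; decide

theorem sum_univ_three_of_ne {M : Type*} [AddCommMonoid M] (f : Fin 3 → M) {i j k : Fin 3}
    (hij : i ≠ j) (hik : i ≠ k) (hjk : j ≠ k) : ∑ l, f l = f i + f j + f k := by
  have huniv : ({i, j, k} : Finset (Fin 3)) = univ :=
    eq_univ_of_card _ (by simp [card_insert_of_notMem, hij, hik, hjk])
  rw [← huniv, sum_insert (by simp [hij, hik]), sum_pair hjk, add_assoc]

theorem sum_sum_filter_lt_three_of_ne {M : Type*} [AddCommMonoid M] (f : Fin 3 → Fin 3 → M)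
    (hf : ∀ i j, f i j = f j i) {i j k : Fin 3} (hij : i ≠ j) (hik : i ≠ k) (hjk : j ≠ k) :
    ∑ a, ∑ b ∈ univ.filter (a < ·), f a b = f i j + f i k + f j k := by
  have h012 : ∑ a, ∑ b ∈ univ.filter (a < ·), f a b = f 0 1 + f 0 2 + f 1 2 := by
    simp [Fin.sum_univ_three, Finset.sum_filter]
  rw [h012]
  fin_cases i <;> fin_cases j <;> fin_cases k <;> simp_all [hf 1 0, hf 2 0, hf 2 1] <;> abel

end Fin

namespace B3Holonomy

variable {L : Type*} [LieRing L] {r : Fin 3 → L} {t s : Fin 3 → Fin 3 → L}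

def cDelta (r : Fin 3 → L) (t s : Fin 3 → Fin 3 → L) : L :=
  (∑ i, r i) + ∑ i, ∑ j ∈ univ.filter (i < ·), (t i j + s i j)

def cPair (r : Fin 3 → L) (t s : Fin 3 → Fin 3 → L) (i j : Fin 3) : L :=
  r i + r j + t i j + s i j

structure Relations (r : Fin 3 → L) (t s : Fin 3 → Fin 3 → L) : Prop where
  t_symm : ∀ i j, t i j = t j i
  s_symm : ∀ i j, s i j = s j i
  lie_r : ∀ i j, i ≠ j → ⁅r i, r j + t i j + s i j⁆ = 0
  lie_t : ∀ i j, i ≠ j → ⁅t i j, r i + r j + s i j⁆ = 0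
  lie_s : ∀ i j, i ≠ j → ⁅s i j, r i + r j + t i j⁆ = 0
  lie_t_t : ∀ i j k, i ≠ j → i ≠ k → j ≠ k → ⁅t i j, t i k + t j k⁆ = 0
  lie_t_s : ∀ i j k, i ≠ j → i ≠ k → j ≠ k → ⁅t i j, s i k + s j k⁆ = 0
  lie_s_t : ∀ i j k, i ≠ j → i ≠ k → j ≠ k → ⁅s i j, t i k + s j k⁆ = 0
  lie_r_t : ∀ i j k, i ≠ j → i ≠ k → j ≠ k → ⁅r i, t j k⁆ = 0
  lie_r_s : ∀ i j k, i ≠ j → i ≠ k → j ≠ k → ⁅r i, s j k⁆ = 0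

theorem cDelta_eq (ht : ∀ i j, t i j = t j i) (hs : ∀ i j, s i j = s j i) {i j k : Fin 3}
    (hij : i ≠ j) (hik : i ≠ k) (hjk : j ≠ k) :
    cDelta r t s = r i + r j + r k + (t i j + s i j) + (t i k + s i k) + (t j k + s j k) := by
  rw [cDelta, Fin.sum_univ_three_of_ne r hij hik hjk,
    Fin.sum_sum_filter_lt_three_of_ne (fun a b ↦ t a b + s a b) (fun a b ↦ by rw [ht, hs])
      hij hik hjk]
  abel

namespace Relations

variable (h : Relations r t s)
include h

theorem cDelta_lie_r (i : Fin 3) : ⁅cDelta r t s, r i⁆ = 0 := by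
  obtain ⟨j, hij, -⟩ := Fin.exists_ne_and_ne i i
  obtain ⟨k, hik, hjk⟩ := Fin.exists_ne_and_ne i j
  rw [← lie_skew, neg_eq_zero, cDelta_eq h.t_symm h.s_symm hij hik hjk]
  calc ⁅r i, r i + r j + r k + (t i j + s i j) + (t i k + s i k) + (t j k + s j k)⁆
      = ⁅r i, r i⁆ + ⁅r i, r j + t i j + s i j⁆ + ⁅r i, r k + t i k + s i k⁆
        + ⁅r i, t j k⁆ + ⁅r i, s j k⁆ := by simp only [lie_add]; abel
    _ = 0 := by
      rw [lie_self, h.lie_r i j hij, h.lie_r i k hik, h.lie_r_t i j k hij hik hjk,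
        h.lie_r_s i j k hij hik hjk]
      simp

theorem cDelta_lie_t {i j : Fin 3} (hij : i ≠ j) : ⁅cDelta r t s, t i j⁆ = 0 := by
  obtain ⟨k, hik, hjk⟩ := Fin.exists_ne_and_ne i j
  have hrk : ⁅t i j, r k⁆ = 0 := by
    rw [← lie_skew, h.lie_r_t k i j hik.symm hjk.symm hij, neg_zero]
  rw [← lie_skew, neg_eq_zero, cDelta_eq h.t_symm h.s_symm hij hik hjk]
  calc ⁅t i j, r i + r j + r k + (t i j + s i j) + (t i k + s i k) + (t j k + s j k)⁆
      = ⁅t i j, t i j⁆ + ⁅t i j, r i + r j + s i j⁆ + ⁅t i j, t i k + t j k⁆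
        + ⁅t i j, s i k + s j k⁆ + ⁅t i j, r k⁆ := by simp only [lie_add]; abel
    _ = 0 := by
      rw [lie_self, h.lie_t i j hij, h.lie_t_t i j k hij hik hjk, h.lie_t_s i j k hij hik hjk,
        hrk]
      simp

theorem cDelta_lie_s {i j : Fin 3} (hij : i ≠ j) : ⁅cDelta r t s, s i j⁆ = 0 := by
  obtain ⟨k, hik, hjk⟩ := Fin.exists_ne_and_ne i j
  have hrk : ⁅s i j, r k⁆ = 0 := by
    rw [← lie_skew, h.lie_r_s k i j hik.symm hjk.symm hij, neg_zero]
  have hji : ⁅s i j, t j k + s i k⁆ = 0 := by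
    rw [h.s_symm i j, h.lie_s_t j i k hij.symm hjk hik]
  rw [← lie_skew, neg_eq_zero, cDelta_eq h.t_symm h.s_symm hij hik hjk]
  calc ⁅s i j, r i + r j + r k + (t i j + s i j) + (t i k + s i k) + (t j k + s j k)⁆
      = ⁅s i j, s i j⁆ + ⁅s i j, r i + r j + t i j⁆ + ⁅s i j, t i k + s j k⁆
        + ⁅s i j, t j k + s i k⁆ + ⁅s i j, r k⁆ := by simp only [lie_add]; abel
    _ = 0 := by
      rw [lie_self, h.lie_s i j hij, h.lie_s_t i j k hij hik hjk, hji, hrk]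
      simp

theorem cDelta_lie_cPair {i j : Fin 3} (hij : i ≠ j) : ⁅cDelta r t s, cPair r t s i j⁆ = 0 := by
  simp only [cPair, lie_add, h.cDelta_lie_r, h.cDelta_lie_t hij, h.cDelta_lie_s hij, add_zero]

theorem cPair_lie_r_left {i j : Fin 3} (hij : i ≠ j) : ⁅cPair r t s i j, r i⁆ = 0 := by
  have e : cPair r t s i j = r i + (r j + t i j + s i j) := by rw [cPair]; abel
  rw [← lie_skew, neg_eq_zero, e, lie_add, lie_self, h.lie_r i j hij, add_zero]

theorem cPair_lie_r_right {i j : Fin 3} (hij : i ≠ j) : ⁅cPair r t s i j, r j⁆ = 0 := by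
  have e : cPair r t s i j = r j + (r i + t j i + s j i) := by
    rw [cPair, h.t_symm, h.s_symm]; abel
  rw [← lie_skew, neg_eq_zero, e, lie_add, lie_self, h.lie_r j i hij.symm, add_zero]

theorem cPair_lie_t {i j : Fin 3} (hij : i ≠ j) : ⁅cPair r t s i j, t i j⁆ = 0 := by
  have e : cPair r t s i j = t i j + (r i + r j + s i j) := by rw [cPair]; abel
  rw [← lie_skew, neg_eq_zero, e, lie_add, lie_self, h.lie_t i j hij, add_zero]

end Relations

end B3Holonomy

/-- Under the `B₃` holonomy relations, for `i < j` the elements `c_Δ`,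
`c_{ij} = r_i + r_j + t_{ij} + s_{ij}` and `x_i r_i + x_j r_j + x_{ij} t_{ij}`
pairwise commute, so their span is an abelian Lie subalgebra. -/
theorem b3_B2_component_abelian
    {L : Type*} [LieRing L] [LieAlgebra ℂ L]
    (r : Fin 3 → L) (t s : Fin 3 → Fin 3 → L)
    (htsymm : ∀ i j, t i j = t j i) (hssymm : ∀ i j, s i j = s j i)
    (hB2 : ∀ i j : Fin 3, i ≠ j →
      ⁅r i, r j + t i j + s i j⁆ = 0 ∧
      ⁅t i j, r i + r j + s i j⁆ = 0 ∧
      ⁅s i j, r i + r j + t i j⁆ = 0)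
    (hA2 : ∀ i j k : Fin 3, i ≠ j → i ≠ k → j ≠ k →
      ⁅t i j, t i k + t j k⁆ = 0 ∧
      ⁅t i j, s i k + s j k⁆ = 0 ∧
      ⁅s i j, t i k + s j k⁆ = 0 ∧
      ⁅r i, t j k⁆ = 0 ∧ ⁅r i, s j k⁆ = 0)
    (cΔ : L)
    (hcΔ : cΔ = (∑ i, r i) +
      ∑ i, ∑ j ∈ Finset.univ.filter (fun j => i < j), (t i j + s i j))
    (i j : Fin 3) (hij : i < j) (xi xj xij : ℂ) :
    ⁅cΔ, r i + r j + t i j + s i j⁆ = 0 ∧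
    ⁅cΔ, xi • r i + xj • r j + xij • t i j⁆ = 0 ∧
    ⁅r i + r j + t i j + s i j, xi • r i + xj • r j + xij • t i j⁆ = 0 ∧
    (∀ x ∈ Submodule.span ℂ
        ({cΔ, r i + r j + t i j + s i j, xi • r i + xj • r j + xij • t i j} : Set L),
      ∀ y ∈ Submodule.span ℂ
        ({cΔ, r i + r j + t i j + s i j, xi • r i + xj • r j + xij • t i j} : Set L),
      ⁅x, y⁆ = 0) := by
  open B3Holonomy in
  have h : Relations r t s :=
    { t_symm := htsymm
      s_symm := hssymm
      lie_r := fun i j hij ↦ (hB2 i j hij).1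
      lie_t := fun i j hij ↦ (hB2 i j hij).2.1
      lie_s := fun i j hij ↦ (hB2 i j hij).2.2
      lie_t_t := fun i j k hij hik hjk ↦ (hA2 i j k hij hik hjk).1
      lie_t_s := fun i j k hij hik hjk ↦ (hA2 i j k hij hik hjk).2.1
      lie_s_t := fun i j k hij hik hjk ↦ (hA2 i j k hij hik hjk).2.2.1
      lie_r_t := fun i j k hij hik hjk ↦ (hA2 i j k hij hik hjk).2.2.2.1
      lie_r_s := fun i j k hij hik hjk ↦ (hA2 i j k hij hik hjk).2.2.2.2 }
  have hΔ : cΔ = cDelta r t s := hcΔ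
  have hP : r i + r j + t i j + s i j = cPair r t s i j := rfl
  rw [hΔ, hP]
  have hΔP := h.cDelta_lie_cPair hij.ne
  have hΔX : ⁅cDelta r t s, xi • r i + xj • r j + xij • t i j⁆ = 0 := by
    simp only [lie_add, lie_smul, h.cDelta_lie_r, h.cDelta_lie_t hij.ne, smul_zero, add_zero]
  have hPX : ⁅cPair r t s i j, xi • r i + xj • r j + xij • t i j⁆ = 0 := by
    simp only [lie_add, lie_smul, h.cPair_lie_r_left hij.ne, h.cPair_lie_r_right hij.ne,
      h.cPair_lie_t hij.ne, smul_zero, add_zero]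
  exact ⟨hΔP, hΔX, hPX, lie_eq_zero_of_mem_span_triple hΔP hΔX hPX⟩
end
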